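/- arXiv:2502.03401 — 6 statements merged into one kernel-verified Lean document; each statement's English description precedes it below -/
import Mathlib

section
/- If f : ℝ^d → ℝ satisfies the symmetric (L₀, L₁)-smoothness condition ‖∇f(x) - ∇f(y)‖ ≤ (L₀ + L₁ · sup_{u ∈ [x,y]} ‖∇f(u)‖)·‖x-y‖ for all x, y (where [x,y] is the segment between x and y), then f is φ-smooth with φ(r, g) = (L₀ + L₁·g)·exp(L₁·r); that is, ‖∇f(x) - ∇f(y)‖ ≤ (L₀ + L₁‖∇f(y)‖)·exp(L₁‖x-y‖)·‖x-y‖ for all x, y. -/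
variable {E : Type*} [NormedAddCommGroup E] [NormedSpace ℝ E]

lemma seg_norm_le' {a b u : E} (hu : u ∈ segment ℝ a b) : ‖u - a‖ ≤ ‖b - a‖ := by
  rw [segment_eq_image'] at hu
  obtain ⟨t, ⟨ht0, ht1⟩, rfl⟩ := hu
  rw [add_sub_cancel_left, norm_smul, Real.norm_eq_abs, abs_of_nonneg ht0]
  nlinarith [norm_nonneg (b - a)]

lemma auxA (f' : E → E) (L0 L1 : ℝ) (hL0 : 0 ≤ L0) (hL1 : 0 ≤ L1)
    (hs : ∀ x y : E, ‖f' x - f' y‖ ≤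
      (L0 + L1 * sSup ((fun u => ‖f' u‖) '' segment ℝ x y)) * ‖x - y‖)
    (a b : E) (hr : L1 * ‖b - a‖ < 1)
    (hbdd : BddAbove ((fun u => ‖f' u‖) '' segment ℝ a b)) :
    sSup ((fun u => ‖f' u‖) '' segment ℝ a b)
      ≤ (‖f' a‖ + L0 * ‖b - a‖) / (1 - L1 * ‖b - a‖) := by
  set r := ‖b - a‖ with hrdef
  have hr0 : 0 ≤ r := norm_nonneg _
  set S := sSup ((fun u => ‖f' u‖) '' segment ℝ a b) with hS
  have hmem : ‖f' a‖ ∈ (fun u => ‖f' u‖) '' segment ℝ a b :=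
    ⟨a, left_mem_segment ℝ a b, rfl⟩
  have hne : ((fun u => ‖f' u‖) '' segment ℝ a b).Nonempty := ⟨_, hmem⟩
  have hS0 : (0:ℝ) ≤ S := le_trans (norm_nonneg _) (le_csSup hbdd hmem)
  have key : S ≤ ‖f' a‖ + (L0 + L1 * S) * r := by
    apply csSup_le hne
    rintro _ ⟨u, hu, rfl⟩
    have hsub : segment ℝ u a ⊆ segment ℝ a b :=
      (convex_segment (𝕜 := ℝ) a b).segment_subset hu (left_mem_segment ℝ a b)
    have hTne : ((fun u => ‖f' u‖) '' segment ℝ u a).Nonempty :=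
      ⟨_, ⟨u, left_mem_segment ℝ u a, rfl⟩⟩
    have hTb : BddAbove ((fun u => ‖f' u‖) '' segment ℝ u a) :=
      hbdd.mono (Set.image_mono hsub)
    have hTle : sSup ((fun u => ‖f' u‖) '' segment ℝ u a) ≤ S :=
      csSup_le_csSup hbdd hTne (Set.image_mono hsub)
    have hT0 : (0:ℝ) ≤ sSup ((fun u => ‖f' u‖) '' segment ℝ u a) :=
      le_trans (norm_nonneg _) (le_csSup hTb ⟨u, left_mem_segment ℝ u a, rfl⟩)
    have h1 := hs u a
    have h2 : ‖u - a‖ ≤ r := seg_norm_le' hu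
    have h3 : ‖f' u‖ - ‖f' a‖ ≤ ‖f' u - f' a‖ := norm_sub_norm_le _ _
    show ‖f' u‖ ≤ _
    nlinarith [norm_nonneg (u - a), mul_le_mul_of_nonneg_right hTle (norm_nonneg (u - a)),
      mul_le_mul_of_nonneg_left h2 (by positivity : (0:ℝ) ≤ L0 + L1 * S)]
  rw [le_div_iff₀ (by linarith : (0:ℝ) < 1 - L1 * r)]
  nlinarith

lemma auxB (f' : E → E) (L0 L1 : ℝ) (hL0 : 0 ≤ L0) (hL1 : 0 ≤ L1)
    (hs : ∀ x y : E, ‖f' x - f' y‖ ≤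
      (L0 + L1 * sSup ((fun u => ‖f' u‖) '' segment ℝ x y)) * ‖x - y‖)
    (a b : E) (hr : L1 * ‖b - a‖ < 1) :
    BddAbove ((fun u => ‖f' u‖) '' segment ℝ a b) := by
  set r := ‖b - a‖ with hrdef
  have hr0 : 0 ≤ r := norm_nonneg _
  refine ⟨(‖f' a‖ + L0 * r) / (1 - L1 * r), ?_⟩
  rintro _ ⟨u, hu, rfl⟩
  have h2 : ‖u - a‖ ≤ r := seg_norm_le' hu
  have hden : (0:ℝ) < 1 - L1 * r := by linarith
  have hden' : (0:ℝ) < 1 - L1 * ‖u - a‖ := by nlinarith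
  have hnum : (0:ℝ) ≤ ‖f' a‖ + L0 * ‖u - a‖ := by positivity
  by_cases hb : BddAbove ((fun u => ‖f' u‖) '' segment ℝ a u)
  · have := auxA f' L0 L1 hL0 hL1 hs a u (by nlinarith) hb
    have hu' : ‖f' u‖ ≤ sSup ((fun u => ‖f' u‖) '' segment ℝ a u) :=
      le_csSup hb ⟨u, right_mem_segment ℝ a u, rfl⟩
    have hmono : (‖f' a‖ + L0 * ‖u - a‖) / (1 - L1 * ‖u - a‖)
        ≤ (‖f' a‖ + L0 * r) / (1 - L1 * r) := by
      apply div_le_div₀ (by positivity) (by nlinarith) hden (by nlinarith)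
    exact le_trans (le_trans hu' this) hmono
  · have hb' : ¬ BddAbove ((fun u => ‖f' u‖) '' segment ℝ u a) := by
      rwa [segment_symm]
    have h1 := hs u a
    rw [Real.sSup_of_not_bddAbove hb'] at h1
    have h3 : ‖f' u‖ - ‖f' a‖ ≤ ‖f' u - f' a‖ := norm_sub_norm_le _ _
    show ‖f' u‖ ≤ _
    rw [le_div_iff₀ hden]
    nlinarith [norm_nonneg (f' u), mul_nonneg hL1 hr0, mul_nonneg (mul_nonneg hL1 hr0) (norm_nonneg (f' u))]

open RealInnerProductSpace

lemma mainbound (f' : E → E) (L0 L1 : ℝ) (hL0 : 0 ≤ L0) (hL1 : 0 < L1)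
    (hs : ∀ x y : E, ‖f' x - f' y‖ ≤
      (L0 + L1 * sSup ((fun u => ‖f' u‖) '' segment ℝ x y)) * ‖x - y‖)
    (x y : E) (n : ℕ) (hn0 : 0 < n) (hn : L1 * (‖x - y‖ / n) < 1) :
    ‖f' x - f' y‖ ≤
      (L0 + L1 * ‖f' y‖) * ((1 - L1 * (‖x - y‖ / n))⁻¹) ^ n * ‖x - y‖ := by
  set r := ‖x - y‖ with hrdef
  have hr0 : 0 ≤ r := norm_nonneg _
  have hnn : (0:ℝ) < n := by exact_mod_cast hn0
  set h := r / n with hdef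
  have hh0 : 0 ≤ h := by positivity
  set q := (1 - L1 * h)⁻¹ with hqdef
  have hden : (0:ℝ) < 1 - L1 * h := by linarith
  have hq0 : 0 < q := by positivity
  have hq1 : 1 ≤ q := by
    rw [hqdef, le_inv_comm₀ one_pos hden]
    nlinarith [mul_nonneg hL1.le hh0]
  have hqid : q = 1 + L1 * h * q := by
    rw [hqdef]
    field_simp
    ring
  set g0 := L0 + L1 * ‖f' y‖ with hg0def
  have hg00 : 0 ≤ g0 := by positivity
  set p : ℕ → E := fun k => y + ((k : ℝ) / n) • (x - y) with hpdef
  have hp0 : p 0 = y := by simp [hpdef]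
  have hpn : p n = x := by
    simp only [hpdef, div_self hnn.ne', one_smul]
    abel
  have hstep : ∀ k : ℕ, p (k + 1) - p k = ((1:ℝ) / n) • (x - y) := by
    intro k
    simp only [hpdef]
    rw [add_sub_add_left_eq_sub, ← sub_smul]
    congr 1
    push_cast
    field_simp
    ring
  have hstepnorm : ∀ k : ℕ, ‖p (k + 1) - p k‖ = h := by
    intro k
    rw [hstep k, norm_smul, Real.norm_eq_abs, abs_of_nonneg (by positivity)]
    rw [hdef, ← hrdef, one_div, inv_mul_eq_div]
  have keystep : ∀ k : ℕ, ‖f' (p (k + 1)) - f' (p k)‖ ≤ q * (L0 + L1 * ‖f' (p k)‖) * h := by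
    intro k
    have hrk : L1 * ‖p (k + 1) - p k‖ < 1 := by rw [hstepnorm k]; exact hn
    have hbdd := auxB f' L0 L1 hL0 hL1.le hs (p k) (p (k + 1)) hrk
    have hsup := auxA f' L0 L1 hL0 hL1.le hs (p k) (p (k + 1)) hrk hbdd
    rw [hstepnorm k] at hsup
    have hM' : sSup ((fun u => ‖f' u‖) '' segment ℝ (p k) (p (k + 1))) * (1 - L1 * h)
        ≤ ‖f' (p k)‖ + L0 * h := by
      rw [← le_div_iff₀ hden]; exact hsup
    have h1 := hs (p (k + 1)) (p k)
    rw [segment_symm, hstepnorm k] at h1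
    refine h1.trans ?_
    have hfin : L0 + L1 * sSup ((fun u => ‖f' u‖) '' segment ℝ (p k) (p (k + 1)))
        ≤ q * (L0 + L1 * ‖f' (p k)‖) := by
      rw [hqdef, inv_mul_eq_div, le_div_iff₀ hden]
      nlinarith [mul_le_mul_of_nonneg_left hM' hL1.le]
    exact mul_le_mul_of_nonneg_right hfin hh0
  have gbound : ∀ k : ℕ, L0 + L1 * ‖f' (p k)‖ ≤ q ^ k * g0 := by
    intro k
    induction k with
    | zero => simp [hp0, hg0def]
    | succ k ih =>
      have h1 : ‖f' (p (k+1))‖ ≤ ‖f' (p k)‖ + q * (L0 + L1 * ‖f' (p k)‖) * h := by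
        have := keystep k
        have h2 : ‖f' (p (k+1))‖ - ‖f' (p k)‖ ≤ ‖f' (p (k+1)) - f' (p k)‖ :=
          norm_sub_norm_le _ _
        linarith
      have h3 : L0 + L1 * ‖f' (p (k+1))‖ ≤ q * (L0 + L1 * ‖f' (p k)‖) := by
        nlinarith [mul_nonneg hL0 (mul_nonneg (mul_nonneg hL1.le hh0) hq0.le),
          norm_nonneg (f' (p k)), mul_nonneg hL1.le (norm_nonneg (f' (p k)))]
      calc L0 + L1 * ‖f' (p (k+1))‖ ≤ q * (L0 + L1 * ‖f' (p k)‖) := h3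
        _ ≤ q * (q ^ k * g0) := mul_le_mul_of_nonneg_left ih hq0.le
        _ = q ^ (k+1) * g0 := by ring
  have tele : ‖f' x - f' y‖ ≤ ∑ k ∈ Finset.range n, ‖f' (p (k+1)) - f' (p k)‖ := by
    have := Finset.sum_range_sub (fun k => f' (p k)) n
    rw [← hp0, ← hpn, ← this]
    exact norm_sum_le _ _
  have termbound : ∀ k ∈ Finset.range n, ‖f' (p (k+1)) - f' (p k)‖ ≤ q ^ n * g0 * h := by
    intro k hk
    rw [Finset.mem_range] at hk
    have h1 : q * (L0 + L1 * ‖f' (p k)‖) ≤ q * (q ^ k * g0) :=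
      mul_le_mul_of_nonneg_left (gbound k) hq0.le
    have h2 : q ^ (k+1) ≤ q ^ n := pow_le_pow_right₀ hq1 hk
    have h4 : q ^ (k+1) * g0 ≤ q ^ n * g0 := mul_le_mul_of_nonneg_right h2 hg00
    have h5 : q * (q ^ k * g0) = q ^ (k+1) * g0 := by ring
    calc ‖f' (p (k+1)) - f' (p k)‖ ≤ q * (L0 + L1 * ‖f' (p k)‖) * h := keystep k
      _ ≤ (q ^ (k+1) * g0) * h := by rw [← h5]; exact mul_le_mul_of_nonneg_right h1 hh0
      _ ≤ q ^ n * g0 * h := mul_le_mul_of_nonneg_right h4 hh0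
  calc ‖f' x - f' y‖ ≤ ∑ k ∈ Finset.range n, ‖f' (p (k+1)) - f' (p k)‖ := tele
    _ ≤ ∑ _k ∈ Finset.range n, q ^ n * g0 * h := Finset.sum_le_sum termbound
    _ = n * (q ^ n * g0 * h) := by rw [Finset.sum_const, Finset.card_range]; ring
    _ = g0 * q ^ n * r := by
        rw [hdef]
        field_simp

/-- Symmetric (L₀,L₁)-smoothness implies φ-smoothness with
    φ(r,g) = (L₀ + L₁ g) exp(L₁ r). -/
theorem stmt1 {d : ℕ} (f : EuclideanSpace ℝ (Fin d) → ℝ)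
    (f' : EuclideanSpace ℝ (Fin d) → EuclideanSpace ℝ (Fin d))
    (hf : ∀ x, HasGradientAt f (f' x) x)
    (L0 L1 : ℝ) (hL0 : 0 ≤ L0) (hL1 : 0 ≤ L1)
    (hsmooth : ∀ x y, ‖f' x - f' y‖ ≤
      (L0 + L1 * sSup ((fun u => ‖f' u‖) '' segment ℝ x y)) * ‖x - y‖) :
    ∀ x y, ‖f' x - f' y‖ ≤
      (L0 + L1 * ‖f' y‖) * Real.exp (L1 * ‖x - y‖) * ‖x - y‖ := by
  intro x y
  rcases eq_or_ne x y with rfl | hxy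
  · simp
  rcases eq_or_lt_of_le hL1 with hL10 | hL1pos
  · have h := hsmooth x y
    rw [← hL10] at h ⊢
    simpa using h
  · set r := ‖x - y‖ with hrdef
    have hrpos : 0 < r := by rw [hrdef]; exact norm_sub_pos_iff.mpr hxy
    have hev : ∀ᶠ n : ℕ in Filter.atTop, ‖f' x - f' y‖ ≤
        (L0 + L1 * ‖f' y‖) * ((1 - L1 * (r / n))⁻¹) ^ n * r := by
      filter_upwards [Filter.eventually_gt_atTop (⌈L1 * r⌉₊)] with n hn
      have hn0 : 0 < n := lt_of_le_of_lt (Nat.zero_le _) hn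
      have hlt : L1 * (r / n) < 1 := by
        rw [mul_div_assoc', div_lt_one (by exact_mod_cast hn0)]
        calc L1 * r ≤ ⌈L1 * r⌉₊ := Nat.le_ceil _
          _ < n := by exact_mod_cast hn
      exact mainbound f' L0 L1 hL0 hL1pos hsmooth x y n hn0 hlt
    refine ge_of_tendsto ?_ hev
    have t1 : Filter.Tendsto (fun n : ℕ => (1 + (-(L1 * r)) / n) ^ n) Filter.atTop
        (nhds (Real.exp (-(L1 * r)))) := Real.tendsto_one_add_div_pow_exp _
    have t2 : Filter.Tendsto (fun n : ℕ => ((1 - L1 * (r / n))⁻¹) ^ n) Filter.atTop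
        (nhds (Real.exp (L1 * r))) := by
      have heq : (fun n : ℕ => ((1 - L1 * (r / n))⁻¹) ^ n)
          = fun n : ℕ => ((1 + (-(L1 * r)) / n) ^ n)⁻¹ := by
        funext n
        rw [inv_pow]
        congr 2
        rw [mul_div_assoc']
        ring
      rw [heq]
      have h3 := t1.inv₀ (Real.exp_ne_zero _)
      rwa [← Real.exp_neg, neg_neg] at h3
    exact (t2.const_mul (L0 + L1 * ‖f' y‖)).mul_const r
end

section
/- Let f : ℝ^d → ℝ be convex, differentiable, and φ-smooth with φ nonnegative and nondecreasing in both arguments. Let x* be a minimizer of f, γ > 0, and consider the proximal iteration x_{k+1} = prox_{γf}(x_k) from x₀. Then for every k ≥ 0, f(x_k) - f(x_{k+1}) ≤ (1/γ + φ(‖x₀ - x*‖, (1/γ)‖x₀ - x*‖)/2)·‖x_k - x_{k+1}‖². -/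
open RealInnerProductSpace

lemma conv_grad {d : ℕ} {f : EuclideanSpace ℝ (Fin d) → ℝ}
    {f' : EuclideanSpace ℝ (Fin d) → EuclideanSpace ℝ (Fin d)}
    (hconv : ConvexOn ℝ Set.univ f)
    (hf : ∀ x, HasGradientAt f (f' x) x)
    (x y : EuclideanSpace ℝ (Fin d)) : f x + ⟪f' x, y - x⟫ ≤ f y := by
  set g : ℝ → ℝ := f ∘ (AffineMap.lineMap x y) with hg
  have hgc : ConvexOn ℝ Set.univ g := by
    have := hconv.comp_affineMap (AffineMap.lineMap x y)
    simpa using this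
  have hgd : ∀ t : ℝ, HasDerivAt g ⟪f' (AffineMap.lineMap x y t), y - x⟫ t := by
    intro t
    have hc : HasDerivAt (fun t : ℝ => AffineMap.lineMap x y t) (y - x) t := by
      have h1 : HasDerivAt (fun t : ℝ => t • (y - x) + x) ((1:ℝ) • (y - x)) t :=
        ((hasDerivAt_id t).smul_const (y - x)).add_const x
      simp only [one_smul] at h1
      have he : (fun t : ℝ => (AffineMap.lineMap x y t : EuclideanSpace ℝ (Fin d)))
          = fun t : ℝ => t • (y - x) + x := by
        funext s; simp [AffineMap.lineMap_apply]
      rw [he]; exact h1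
    have := (hf (AffineMap.lineMap x y t)).hasFDerivAt.comp_hasDerivAt t hc
    simpa [InnerProductSpace.toDual_apply_apply] using this
  have hs := hgc.le_slope_of_hasDerivAt (Set.mem_univ (0:ℝ)) (Set.mem_univ (1:ℝ))
      one_pos (hgd 0)
  rw [slope_def_field] at hs
  simp only [g, Function.comp, AffineMap.lineMap_apply_zero, AffineMap.lineMap_apply_one] at hs
  simp only [AffineMap.lineMap_apply_zero, sub_zero, div_one] at hs
  linarith

lemma gauss_sum_aux (N : ℕ) : ∑ i ∈ Finset.range N, ((i:ℝ)+1) = (N:ℝ) * ((N:ℝ)+1) / 2 := by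
  induction N with
  | zero => simp
  | succ n ih =>
    rw [Finset.sum_range_succ, ih]
    push_cast; ring

lemma descent_lemma {d : ℕ} {f : EuclideanSpace ℝ (Fin d) → ℝ}
    {f' : EuclideanSpace ℝ (Fin d) → EuclideanSpace ℝ (Fin d)}
    (hconv : ConvexOn ℝ Set.univ f)
    (hf : ∀ x, HasGradientAt f (f' x) x)
    {φ : ℝ → ℝ → ℝ}
    (hφ_nonneg : ∀ a b, 0 ≤ a → 0 ≤ b → 0 ≤ φ a b)
    (hφ_mono : ∀ a a' b b', 0 ≤ a → 0 ≤ b → a ≤ a' → b ≤ b' → φ a b ≤ φ a' b')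
    (hsmooth : ∀ x y, ‖f' x - f' y‖ ≤ φ ‖x - y‖ ‖f' y‖ * ‖x - y‖)
    (x y : EuclideanSpace ℝ (Fin d)) :
    f x ≤ f y + ⟪f' y, x - y⟫ + φ ‖x - y‖ ‖f' y‖ / 2 * ‖x - y‖ ^ 2 := by
  set v := x - y with hv
  set R := ‖v‖ with hR
  set C := φ R ‖f' y‖ with hCdef
  have hR0 : (0:ℝ) ≤ R := norm_nonneg _
  have hC : 0 ≤ C := hφ_nonneg _ _ hR0 (norm_nonneg _)
  have key : ∀ N : ℕ, 0 < N →
      f x - f y ≤ ⟪f' y, v⟫ + C * R ^ 2 * (((N:ℝ) + 1) / (2 * N)) := by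
    intro N hN
    have hN' : (0:ℝ) < N := by exact_mod_cast hN
    set z : ℕ → EuclideanSpace ℝ (Fin d) := fun i => y + ((i : ℝ)/N) • v with hz
    have hz0 : z 0 = y := by simp [hz]
    have hzN : z N = x := by
      simp only [hz, div_self hN'.ne']
      rw [one_smul, hv]; abel
    have tele : f x - f y = ∑ i ∈ Finset.range N, (f (z (i+1)) - f (z i)) := by
      rw [Finset.sum_range_sub (fun i => f (z i)), hz0, hzN]
    have hdiffy : ∀ i : ℕ, z (i+1) - y = (((i:ℝ)+1)/N) • v := by
      intro i; simp only [hz]; push_cast; abel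
    have hstep : ∀ i ∈ Finset.range N,
        f (z (i+1)) - f (z i) ≤ (1/(N:ℝ)) * ⟪f' y, v⟫ + C * R ^ 2 * (((i:ℝ)+1)/(N:ℝ)^2) := by
      intro i hi
      have hiN : (i:ℝ) + 1 ≤ N := by
        have := Finset.mem_range.mp hi
        exact_mod_cast Nat.succ_le_of_lt this
      have h1 := conv_grad hconv hf (z (i+1)) (z i)
      have hdiff : z i - z (i+1) = -(((1:ℝ)/N) • v) := by
        simp only [hz]; push_cast
        match_scalars <;> field_simp <;> ring
      rw [hdiff, inner_neg_right] at h1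
      have h2 : f (z (i+1)) - f (z i) ≤ ⟪f' (z (i+1)), ((1:ℝ)/N) • v⟫ := by linarith
      have hsplit : ⟪f' (z (i+1)), ((1:ℝ)/N) • v⟫
          = (1/(N:ℝ)) * ⟪f' y, v⟫ + (1/(N:ℝ)) * ⟪f' (z (i+1)) - f' y, v⟫ := by
        rw [real_inner_smul_right, inner_sub_left]; ring
      have hnormz : ‖z (i+1) - y‖ = (((i:ℝ)+1)/N) * R := by
        rw [hdiffy i, norm_smul, Real.norm_eq_abs, abs_of_nonneg (by positivity)]
      have hfrac1 : (((i:ℝ)+1)/N) ≤ 1 := by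
        rw [div_le_one hN']; exact hiN
      have hzy0 : (0:ℝ) ≤ (((i:ℝ)+1)/N) * R := by positivity
      have hb : ⟪f' (z (i+1)) - f' y, v⟫ ≤ C * ((((i:ℝ)+1)/N) * R) * R := by
        calc ⟪f' (z (i+1)) - f' y, v⟫ ≤ ‖f' (z (i+1)) - f' y‖ * ‖v‖ :=
              real_inner_le_norm _ _
          _ ≤ (φ ‖z (i+1) - y‖ ‖f' y‖ * ‖z (i+1) - y‖) * R :=
              mul_le_mul_of_nonneg_right (hsmooth _ _) hR0
          _ ≤ C * ((((i:ℝ)+1)/N) * R) * R := by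
              rw [hnormz]
              have hφle : φ ((((i:ℝ)+1)/N) * R) ‖f' y‖ ≤ C := by
                apply hφ_mono _ _ _ _ hzy0 (norm_nonneg _) _ le_rfl
                calc (((i:ℝ)+1)/N) * R ≤ 1 * R :=
                      mul_le_mul_of_nonneg_right hfrac1 hR0
                  _ = R := one_mul R
              exact mul_le_mul_of_nonneg_right
                (mul_le_mul_of_nonneg_right hφle hzy0) hR0
      calc f (z (i+1)) - f (z i) ≤ ⟪f' (z (i+1)), ((1:ℝ)/N) • v⟫ := h2
        _ = (1/(N:ℝ)) * ⟪f' y, v⟫ + (1/(N:ℝ)) * ⟪f' (z (i+1)) - f' y, v⟫ := hsplit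
        _ ≤ (1/(N:ℝ)) * ⟪f' y, v⟫ + (1/(N:ℝ)) * (C * ((((i:ℝ)+1)/N) * R) * R) := by
            have h1N : (0:ℝ) ≤ 1/(N:ℝ) := by positivity
            exact add_le_add_right (mul_le_mul_of_nonneg_left hb h1N) _
        _ = (1/(N:ℝ)) * ⟪f' y, v⟫ + C * R ^ 2 * (((i:ℝ)+1)/(N:ℝ)^2) := by ring
    have hsum := Finset.sum_le_sum hstep
    rw [← tele] at hsum
    have hsum2 : ∑ i ∈ Finset.range N,
        ((1/(N:ℝ)) * ⟪f' y, v⟫ + C * R ^ 2 * (((i:ℝ)+1)/(N:ℝ)^2))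
        = ⟪f' y, v⟫ + C * R ^ 2 * (((N:ℝ) + 1) / (2 * N)) := by
      rw [Finset.sum_add_distrib, Finset.sum_const, Finset.card_range]
      have h4 : ∑ i ∈ Finset.range N, C * R ^ 2 * (((i:ℝ)+1)/(N:ℝ)^2)
          = C * R ^ 2 / (N:ℝ)^2 * ∑ i ∈ Finset.range N, (((i:ℝ)+1)) := by
        rw [Finset.mul_sum]; congr 1; funext i; ring
      rw [h4, gauss_sum_aux]
      field_simp
      have hNN : (N:ℝ)^2 * (N:ℝ)⁻¹ = N := by rw [pow_two, mul_assoc, mul_inv_cancel₀ hN'.ne', mul_one]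
      linear_combination (⟪f' y, v⟫ * 2) * hNN
    rw [hsum2] at hsum
    exact hsum
  -- pass to the limit
  set A := f x - f y - ⟪f' y, v⟫ - C * R ^ 2 / 2 with hA
  have hgoal : A ≤ 0 := by
    by_contra hcon
    push_neg at hcon
    obtain ⟨N, hNgt⟩ := exists_nat_gt (C * R ^ 2 / (2 * A))
    have hkey := key (N + 1) (Nat.succ_pos N)
    push_cast at hkey
    have hMpos : (0:ℝ) < (N:ℝ) + 1 := by positivity
    have h1 : C * R ^ 2 < 2 * A * ((N:ℝ) + 1) := by
      have hlt : C * R ^ 2 / (2 * A) < (N:ℝ) + 1 := by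
        have : (N:ℝ) < (N:ℝ) + 1 := by linarith
        linarith
      have := (div_lt_iff₀ (by linarith : (0:ℝ) < 2 * A)).mp hlt
      nlinarith
    have h2 : C * R ^ 2 * (((N:ℝ) + 1 + 1)/(2*((N:ℝ)+1)))
        = C * R ^ 2 / 2 + C * R ^ 2 / (2*((N:ℝ)+1)) := by
      field_simp
    have h3 : C * R ^ 2 / (2*((N:ℝ)+1)) < A := by
      rw [div_lt_iff₀ (by positivity)]
      nlinarith
    rw [h2] at hkey
    have : A < A := by
      calc A = f x - f y - ⟪f' y, v⟫ - C * R ^ 2 / 2 := hA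
        _ ≤ C * R ^ 2 / (2*((N:ℝ)+1)) := by linarith
        _ < A := h3
    exact lt_irrefl _ this
  have hrw : φ ‖x - y‖ ‖f' y‖ / 2 * ‖x - y‖ ^ 2 = C * R ^ 2 / 2 := by
    rw [hCdef, hR, hv]; ring
  rw [hrw]
  rw [hA] at hgoal
  linarith [hgoal]

lemma prox_grad {d : ℕ} {f : EuclideanSpace ℝ (Fin d) → ℝ}
    {f' : EuclideanSpace ℝ (Fin d) → EuclideanSpace ℝ (Fin d)}
    (hf : ∀ x, HasGradientAt f (f' x) x) {γ : ℝ} (hγ : 0 < γ)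
    (c p : EuclideanSpace ℝ (Fin d))
    (hmin : ∀ z, f p + ‖p - c‖ ^ 2 / (2 * γ) ≤ f z + ‖z - c‖ ^ 2 / (2 * γ)) :
    f' p = (1 / γ) • (c - p) := by
  set F : EuclideanSpace ℝ (Fin d) → ℝ := fun z => f z + (1 / (2 * γ)) * ‖z - c‖ ^ 2 with hF
  have hγ' : (2 : ℝ) * γ ≠ 0 := by positivity
  have hFe : ∀ z, F z = f z + ‖z - c‖ ^ 2 / (2 * γ) := by
    intro z; rw [hF]; ring
  have hsq : HasFDerivAt (fun z : EuclideanSpace ℝ (Fin d) => ‖z - c‖ ^ 2)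
      (2 • ((innerSL ℝ (p - c)).comp (ContinuousLinearMap.id ℝ (EuclideanSpace ℝ (Fin d))))) p := by
    have := ((hasFDerivAt_id p).sub_const c).norm_sq
    simpa using this
  have hFd : HasFDerivAt F
      ((InnerProductSpace.toDual ℝ (EuclideanSpace ℝ (Fin d)) (f' p) : EuclideanSpace ℝ (Fin d) →L[ℝ] ℝ) +
        (1 / (2 * γ)) • (2 • ((innerSL ℝ (p - c)).comp (ContinuousLinearMap.id ℝ (EuclideanSpace ℝ (Fin d)))))) p :=
    ((hf p).hasFDerivAt).add (hsq.const_mul _)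
  have hlm : IsLocalMin F p := by
    apply Filter.Eventually.of_forall
    intro z
    rw [hFe z, hFe p]; exact hmin z
  have hL := hlm.hasFDerivAt_eq_zero hFd
  apply ext_inner_right ℝ
  intro v
  have hv := ContinuousLinearMap.ext_iff.mp hL v
  simp only [ContinuousLinearMap.add_apply, ContinuousLinearMap.smul_apply,
    ContinuousLinearMap.coe_smul', Pi.smul_apply, ContinuousLinearMap.coe_comp',
    Function.comp_apply, ContinuousLinearMap.coe_id', id_eq, innerSL_apply_apply,
    InnerProductSpace.toDual_apply_apply, ContinuousLinearMap.zero_apply, smul_eq_mul] at hv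
  have h1 : ⟪p - c, v⟫ = -⟪c - p, v⟫ := by
    rw [← inner_neg_left]; congr 1; abel
  rw [real_inner_smul_left]
  rw [h1] at hv
  field_simp at hv ⊢
  simp only [nsmul_eq_mul, Nat.cast_ofNat] at hv
  linarith

/-- Function-value decrease bound along the proximal point iteration under
    φ-smoothness. -/
theorem stmt6 {d : ℕ} (f : EuclideanSpace ℝ (Fin d) → ℝ)
    (f' : EuclideanSpace ℝ (Fin d) → EuclideanSpace ℝ (Fin d))
    (hconv : ConvexOn ℝ Set.univ f)
    (hf : ∀ x, HasGradientAt f (f' x) x)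
    (φ : ℝ → ℝ → ℝ)
    (hφ_nonneg : ∀ a b, 0 ≤ a → 0 ≤ b → 0 ≤ φ a b)
    (hφ_mono : ∀ a a' b b', 0 ≤ a → 0 ≤ b → a ≤ a' → b ≤ b' → φ a b ≤ φ a' b')
    (hsmooth : ∀ x y, ‖f' x - f' y‖ ≤ φ ‖x - y‖ ‖f' y‖ * ‖x - y‖)
    (xstar : EuclideanSpace ℝ (Fin d)) (hstar : ∀ z, f xstar ≤ f z)
    (γ : ℝ) (hγ : 0 < γ)
    (xs : ℕ → EuclideanSpace ℝ (Fin d))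
    (hxs : ∀ k z, f (xs (k + 1)) + ‖xs (k + 1) - xs k‖ ^ 2 / (2 * γ) ≤
      f z + ‖z - xs k‖ ^ 2 / (2 * γ)) :
    ∀ k, f (xs k) - f (xs (k + 1)) ≤
      (1 / γ + φ ‖xs 0 - xstar‖ ((1 / γ) * ‖xs 0 - xstar‖) / 2) *
        ‖xs k - xs (k + 1)‖ ^ 2 := by
  have hγ' : (0:ℝ) < 1 / γ := by positivity
  have h_grad : ∀ k, f' (xs (k+1)) = (1/γ) • (xs k - xs (k+1)) := fun k =>
    prox_grad hf hγ (xs k) (xs (k+1)) (hxs k)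
  have h_inner : ∀ k, ⟪xs k - xs (k+1), xstar - xs (k+1)⟫ ≤ 0 := by
    intro k
    have h := conv_grad hconv hf (xs (k+1)) xstar
    have h2 := hstar (xs (k+1))
    have h3 : ⟪f' (xs (k+1)), xstar - xs (k+1)⟫ ≤ 0 := by linarith
    rw [h_grad k, real_inner_smul_left] at h3
    nlinarith
  have h_pyth : ∀ k, ‖xs k - xs (k+1)‖^2 + ‖xs (k+1) - xstar‖^2 ≤ ‖xs k - xstar‖^2 := by
    intro k
    have hdecomp : xs k - xstar = (xs k - xs (k+1)) + (xs (k+1) - xstar) := by abel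
    rw [hdecomp, norm_add_sq_real]
    have h1 : ⟪xs k - xs (k+1), xs (k+1) - xstar⟫
        = -⟪xs k - xs (k+1), xstar - xs (k+1)⟫ := by
      rw [← inner_neg_right]; congr 1; abel
    nlinarith [h_inner k]
  have h_dist : ∀ k, ‖xs k - xstar‖ ≤ ‖xs 0 - xstar‖ := by
    intro k
    induction k with
    | zero => exact le_refl _
    | succ n ih =>
      have := h_pyth n
      nlinarith [norm_nonneg (xs (n+1) - xstar), norm_nonneg (xs n - xstar),
        norm_nonneg (xs n - xs (n+1)), norm_nonneg (xs 0 - xstar)]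
  have h_step : ∀ k, ‖xs k - xs (k+1)‖ ≤ ‖xs 0 - xstar‖ := by
    intro k
    have := h_pyth k
    have := h_dist k
    nlinarith [norm_nonneg (xs (k+1) - xstar), norm_nonneg (xs k - xs (k+1)),
      norm_nonneg (xs k - xstar), norm_nonneg (xs 0 - xstar)]
  intro k
  have hdesc := descent_lemma hconv hf hφ_nonneg hφ_mono hsmooth (xs k) (xs (k+1))
  have hip : ⟪f' (xs (k+1)), xs k - xs (k+1)⟫ = (1/γ) * ‖xs k - xs (k+1)‖^2 := by
    rw [h_grad k, real_inner_smul_left, real_inner_self_eq_norm_sq]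
  have hfnorm : ‖f' (xs (k+1))‖ = (1/γ) * ‖xs k - xs (k+1)‖ := by
    rw [h_grad k, norm_smul, Real.norm_eq_abs, abs_of_pos hγ']
  have hφb : φ ‖xs k - xs (k+1)‖ ‖f' (xs (k+1))‖
      ≤ φ ‖xs 0 - xstar‖ ((1 / γ) * ‖xs 0 - xstar‖) := by
    apply hφ_mono _ _ _ _ (norm_nonneg _) (norm_nonneg _) (h_step k)
    rw [hfnorm]
    exact mul_le_mul_of_nonneg_left (h_step k) (le_of_lt hγ')
  rw [hip, hfnorm] at hdesc
  rw [hfnorm] at hφb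
  have hφ0 : 0 ≤ φ ‖xs k - xs (k+1)‖ ((1/γ) * ‖xs k - xs (k+1)‖) := by
    apply hφ_nonneg _ _ (norm_nonneg _) (by positivity)
  nlinarith [sq_nonneg ‖xs k - xs (k+1)‖, hφb, hdesc]
end

section
/- Let f : ℝ^d → ℝ be convex, differentiable, φ-smooth (with φ nonnegative, nondecreasing in both arguments), with minimizer x* satisfying ∇f(x*) = 0. Let γ > 0 and define M = 1/γ + φ(‖x₀-x*‖, (1/γ)‖x₀-x*‖)/2. Then the proximal point iterates x_{k+1} = prox_{γf}(x_k) satisfy, for all k ≥ 1: min_{0 ≤ t ≤ k-1} (f(x_t) - f(x*)) ≤ (1/k)·∑_{t=0}^{k-1}(f(x_t) - f(x*)) ≤ (M/k)·‖x₀ - x*‖². -/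
open RealInnerProductSpace Finset

section Helpers

variable {E : Type*} [NormedAddCommGroup E] [InnerProductSpace ℝ E] [CompleteSpace E]

/-- First-order condition for convex functions. -/
lemma my_grad_ineq {f : E → ℝ} (hconv : ConvexOn ℝ Set.univ f) {x g : E}
    (hg : HasGradientAt f g x) (y : E) : f x + ⟪g, y - x⟫ ≤ f y := by
  have hc : ∀ t : ℝ, HasDerivAt (fun t : ℝ => x + t • (y - x)) (y - x) t := by
    intro t
    simpa using ((hasDerivAt_id t).smul_const (y - x)).const_add x
  have hd : HasDerivAt (fun t : ℝ => f (x + t • (y - x))) ⟪g, y - x⟫ 0 := by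
    have hx : x + (0:ℝ) • (y - x) = x := by simp
    have h1 : HasFDerivAt f ((InnerProductSpace.toDual ℝ E) g) (x + (0:ℝ) • (y - x)) := by
      rw [hx]; exact hg.hasFDerivAt
    have := h1.comp_hasDerivAt (x := 0) (hc 0)
    simp only [InnerProductSpace.toDual_apply_apply] at this
    exact this
  have hslope := hasDerivAt_iff_tendsto_slope.mp hd
  have hslope' : Filter.Tendsto (slope (fun t : ℝ => f (x + t • (y - x))) 0)
      (nhdsWithin 0 (Set.Ioi 0)) (nhds ⟪g, y - x⟫) :=
    hslope.mono_left (nhdsWithin_mono _ (fun t ht => ne_of_gt ht))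
  have hle : ⟪g, y - x⟫ ≤ f y - f x := by
    refine le_of_tendsto hslope' ?_
    filter_upwards [Ioo_mem_nhdsGT_of_mem (Set.mem_Ico.mpr ⟨le_refl _, one_pos⟩)] with t ht
    have ht0 : (0:ℝ) < t := ht.1
    have hcomb : x + t • (y - x) = (1 - t) • x + t • y := by
      rw [sub_smul, smul_sub, one_smul]; abel
    have hcv := hconv.2 (Set.mem_univ x) (Set.mem_univ y)
      (by linarith [ht.2] : (0:ℝ) ≤ 1 - t) (le_of_lt ht0) (by ring)
    rw [slope_def_field]
    have : f (x + t • (y - x)) ≤ (1 - t) * f x + t * f y := by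
      rw [hcomb]; simpa [smul_eq_mul] using hcv
    have h0 : x + (0:ℝ) • (y - x) = x := by simp
    rw [h0, sub_zero, div_le_iff₀ ht0]
    nlinarith
  linarith

/-- Descent-type lemma along a segment. -/
lemma my_descent {f : E → ℝ} {f' : E → E} (hf : ∀ z, HasGradientAt f (f' z) z)
    (x y : E) (L : ℝ)
    (hL : ∀ t : ℝ, t ∈ Set.Icc (0:ℝ) 1 → ‖f' (y + t • (x - y)) - f' y‖ ≤ L * (t * ‖x - y‖)) :
    f x ≤ f y + ⟪f' y, x - y⟫ + L / 2 * ‖x - y‖ ^ 2 := by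
  set v := x - y with hv
  have hc : ∀ t : ℝ, HasDerivAt (fun t : ℝ => y + t • v) v t := by
    intro t; simpa using ((hasDerivAt_id t).smul_const v).const_add y
  have hd : ∀ t : ℝ, HasDerivAt (fun t : ℝ => f (y + t • v)) ⟪f' (y + t • v), v⟫ t := by
    intro t
    have := (hf (y + t • v)).hasFDerivAt.comp_hasDerivAt (x := t) (hc t)
    simp only [InnerProductSpace.toDual_apply_apply] at this
    exact this
  set q : ℝ → ℝ := fun t => f y + t * ⟪f' y, v⟫ + L * t ^ 2 * ‖v‖ ^ 2 / 2 - f (y + t • v)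
    with hq
  have hq' : ∀ t : ℝ, HasDerivAt q
      (⟪f' y, v⟫ + L * (2 * t) * ‖v‖ ^ 2 / 2 - ⟪f' (y + t • v), v⟫) t := by
    intro t
    have h1 : HasDerivAt (fun s : ℝ => f y + s * ⟪f' y, v⟫ + L * s ^ 2 * ‖v‖ ^ 2 / 2)
        (⟪f' y, v⟫ + L * (2 * t) * ‖v‖ ^ 2 / 2) t := by
      have ha : HasDerivAt (fun s : ℝ => s * ⟪f' y, v⟫) ⟪f' y, v⟫ t := by
        simpa using (hasDerivAt_id t).mul_const ⟪f' y, v⟫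
      have hb : HasDerivAt (fun s : ℝ => L * s ^ 2 * ‖v‖ ^ 2 / 2)
          (L * (2 * t) * ‖v‖ ^ 2 / 2) t := by
        have := (hasDerivAt_pow 2 t).const_mul L
        have := (this.mul_const (‖v‖ ^ 2)).div_const 2
        exact this.congr_deriv (by norm_num)
      exact (ha.const_add (f y)).add hb
    exact h1.sub (hd t)
  have hmono : MonotoneOn q (Set.Icc (0:ℝ) 1) := by
    apply monotoneOn_of_deriv_nonneg (convex_Icc 0 1)
    · exact (Differentiable.continuous fun t => (hq' t).differentiableAt).continuousOn
    · intro t _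
      exact (hq' t).differentiableAt.differentiableWithinAt
    · intro t ht
      rw [interior_Icc] at ht
      rw [(hq' t).deriv]
      have hbd := hL t ⟨le_of_lt ht.1, le_of_lt ht.2⟩
      have hip : ⟪f' (y + t • v) - f' y, v⟫ ≤ ‖f' (y + t • v) - f' y‖ * ‖v‖ :=
        real_inner_le_norm _ _
      have : ⟪f' (y + t • v), v⟫ - ⟪f' y, v⟫ ≤ L * (t * ‖v‖) * ‖v‖ := by
        rw [← inner_sub_left]
        exact le_trans hip (by nlinarith [norm_nonneg v, hbd])
      nlinarith
  have h01 := hmono (Set.mem_Icc.mpr ⟨le_refl 0, zero_le_one⟩)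
    (Set.mem_Icc.mpr ⟨zero_le_one, le_refl 1⟩) zero_le_one
  have h0 : q 0 = 0 := by simp [hq]
  have hyv : y + v = x := by rw [hv]; abel
  have h1 : q 1 = f y + ⟪f' y, v⟫ + L * ‖v‖ ^ 2 / 2 - f x := by
    simp [hq, hyv]
  rw [h0, h1] at h01
  linarith

/-- Optimality condition for the proximal subproblem. -/
lemma my_prox_opt {f : E → ℝ} {f' : E → E} (hf : ∀ z, HasGradientAt f (f' z) z)
    {γ : ℝ} (hγ : 0 < γ) (c p : E)
    (hmin : ∀ z, f p + ‖p - c‖ ^ 2 / (2 * γ) ≤ f z + ‖z - c‖ ^ 2 / (2 * γ)) :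
    f' p = γ⁻¹ • (c - p) := by
  set g : E → ℝ := fun w => f w + ‖w - c‖ ^ 2 / (2 * γ) with hg
  have hB : HasFDerivAt (fun w : E => ‖w - c‖ ^ 2 / (2 * γ))
      ((2 * γ)⁻¹ • (2 • (innerSL ℝ (p - c)).comp (ContinuousLinearMap.id ℝ E))) p := by
    have h1 : HasFDerivAt (fun w : E => w - c) (ContinuousLinearMap.id ℝ E) p :=
      (hasFDerivAt_id p).sub_const c
    have h2 := h1.norm_sq
    have h3 := h2.const_smul (𝕜 := ℝ) (R := ℝ) ((2 * γ)⁻¹)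
    have e : (fun w : E => ‖w - c‖ ^ 2 / (2 * γ)) = (2 * γ)⁻¹ • fun x => ‖x - c‖ ^ 2 := by
      funext w; rw [Pi.smul_apply, smul_eq_mul]; ring
    rw [e]; exact h3
  have hD : HasFDerivAt g
      ((InnerProductSpace.toDual ℝ E) (f' p) +
        (2 * γ)⁻¹ • (2 • (innerSL ℝ (p - c)).comp (ContinuousLinearMap.id ℝ E))) p :=
    (hf p).hasFDerivAt.add hB
  have hloc : IsLocalMin g p := Filter.Eventually.of_forall hmin
  have hzero := hloc.hasFDerivAt_eq_zero hD
  have hkey : (InnerProductSpace.toDual ℝ E) (f' p + γ⁻¹ • (p - c)) = 0 := by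
    rw [← hzero]
    ext w
    simp only [InnerProductSpace.toDual_apply_apply, ContinuousLinearMap.add_apply,
      ContinuousLinearMap.smul_apply, ContinuousLinearMap.coe_smul', Pi.smul_apply,
      ContinuousLinearMap.coe_comp', Function.comp_apply, ContinuousLinearMap.coe_id',
      id_eq, innerSL_apply_apply, smul_eq_mul, inner_add_left, inner_smul_left,
      RCLike.conj_to_real]
    field_simp
    ring
  have h0 : f' p + γ⁻¹ • (p - c) = 0 :=
    (InnerProductSpace.toDual ℝ E).injective (by rw [hkey]; exact (map_zero _).symm)
  have h1 : f' p = -(γ⁻¹ • (p - c)) := eq_neg_of_add_eq_zero_left h0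
  rw [h1, ← smul_neg, neg_sub]

end Helpers

/-- Sublinear convergence of the deterministic proximal point method under
    convexity and φ-smoothness. -/
theorem stmt8 {d : ℕ} (f : EuclideanSpace ℝ (Fin d) → ℝ)
    (f' : EuclideanSpace ℝ (Fin d) → EuclideanSpace ℝ (Fin d))
    (hconv : ConvexOn ℝ Set.univ f)
    (hf : ∀ x, HasGradientAt f (f' x) x)
    (φ : ℝ → ℝ → ℝ)
    (hφ_nonneg : ∀ a b, 0 ≤ a → 0 ≤ b → 0 ≤ φ a b)
    (hφ_mono : ∀ a a' b b', 0 ≤ a → 0 ≤ b → a ≤ a' → b ≤ b' → φ a b ≤ φ a' b')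
    (hsmooth : ∀ x y, ‖f' x - f' y‖ ≤ φ ‖x - y‖ ‖f' y‖ * ‖x - y‖)
    (xstar : EuclideanSpace ℝ (Fin d)) (hstar : ∀ z, f xstar ≤ f z)
    (hgrad0 : f' xstar = 0)
    (γ : ℝ) (hγ : 0 < γ)
    (xs : ℕ → EuclideanSpace ℝ (Fin d))
    (M : ℝ) (hM : M = 1 / γ + φ ‖xs 0 - xstar‖ ((1 / γ) * ‖xs 0 - xstar‖) / 2)
    (hxs : ∀ k z, f (xs (k + 1)) + ‖xs (k + 1) - xs k‖ ^ 2 / (2 * γ) ≤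
      f z + ‖z - xs k‖ ^ 2 / (2 * γ)) :
    ∀ k : ℕ, ∀ hk : 0 < k,
      (Finset.range k).inf' (Finset.nonempty_range_iff.mpr hk.ne')
          (fun t => f (xs t) - f xstar) ≤
        (1 / (k : ℝ)) * ∑ t ∈ Finset.range k, (f (xs t) - f xstar) ∧
      (1 / (k : ℝ)) * ∑ t ∈ Finset.range k, (f (xs t) - f xstar) ≤
        (M / (k : ℝ)) * ‖xs 0 - xstar‖ ^ 2 := by
  have hφ0 : 0 ≤ φ ‖xs 0 - xstar‖ ((1 / γ) * ‖xs 0 - xstar‖) :=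
    hφ_nonneg _ _ (norm_nonneg _)
      (mul_nonneg (by positivity) (norm_nonneg _))
  have hMpos : 0 < M := by
    rw [hM]
    have h1γ : 0 < 1 / γ := by positivity
    linarith
  -- optimality condition
  have hopt : ∀ k : ℕ, f' (xs (k + 1)) = γ⁻¹ • (xs k - xs (k + 1)) := fun k =>
    my_prox_opt hf hγ (xs k) (xs (k + 1)) (hxs k)
  -- key contraction inequality
  have hA : ∀ k : ℕ, 2 * γ * (f (xs (k + 1)) - f xstar) + ‖xs (k + 1) - xs k‖ ^ 2 +
      ‖xs (k + 1) - xstar‖ ^ 2 ≤ ‖xs k - xstar‖ ^ 2 := by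
    intro k
    have hgi := my_grad_ineq hconv (hf (xs (k + 1))) xstar
    rw [hopt k, real_inner_smul_left] at hgi
    have hid : ‖(xs k - xs (k + 1)) - (xstar - xs (k + 1))‖ ^ 2 =
        ‖xs k - xs (k + 1)‖ ^ 2 - 2 * ⟪xs k - xs (k + 1), xstar - xs (k + 1)⟫ +
          ‖xstar - xs (k + 1)‖ ^ 2 := norm_sub_sq_real _ _
    have he : (xs k - xs (k + 1)) - (xstar - xs (k + 1)) = xs k - xstar := by abel
    rw [he] at hid
    have hn1 : ‖xs (k + 1) - xs k‖ = ‖xs k - xs (k + 1)‖ := norm_sub_rev _ _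
    have hn2 : ‖xs (k + 1) - xstar‖ = ‖xstar - xs (k + 1)‖ := norm_sub_rev _ _
    rw [hn1, hn2]
    have hgi' : γ⁻¹ * ⟪xs k - xs (k + 1), xstar - xs (k + 1)⟫ ≤ f xstar - f (xs (k + 1)) := by
      linarith
    have hγi : 0 < γ⁻¹ := by positivity
    have := mul_le_mul_of_nonneg_left hgi' (le_of_lt hγ)
    have hγγ : γ * (γ⁻¹ * ⟪xs k - xs (k + 1), xstar - xs (k + 1)⟫) =
        ⟪xs k - xs (k + 1), xstar - xs (k + 1)⟫ := by
      field_simp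
    rw [hγγ] at this
    nlinarith
  -- monotone decrease
  have hdecsq : ∀ k : ℕ, ‖xs (k + 1) - xstar‖ ^ 2 ≤ ‖xs k - xstar‖ ^ 2 := by
    intro k
    nlinarith [hA k, hstar (xs (k + 1)), sq_nonneg ‖xs (k + 1) - xs k‖]
  have hmonsq : ∀ k : ℕ, ‖xs k - xstar‖ ^ 2 ≤ ‖xs 0 - xstar‖ ^ 2 := by
    intro k
    induction k with
    | zero => exact le_refl _
    | succ n ih => exact le_trans (hdecsq n) ih
  have hmon : ∀ k : ℕ, ‖xs k - xstar‖ ≤ ‖xs 0 - xstar‖ := by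
    intro k
    have := Real.sqrt_le_sqrt (hmonsq k)
    rwa [Real.sqrt_sq (norm_nonneg _), Real.sqrt_sq (norm_nonneg _)] at this
  have hΔ : ∀ k : ℕ, ‖xs (k + 1) - xs k‖ ≤ ‖xs 0 - xstar‖ := by
    intro k
    have h1 : ‖xs (k + 1) - xs k‖ ^ 2 ≤ ‖xs 0 - xstar‖ ^ 2 := by
      nlinarith [hA k, hstar (xs (k + 1)), sq_nonneg ‖xs (k + 1) - xstar‖, hmonsq k]
    have := Real.sqrt_le_sqrt h1
    rwa [Real.sqrt_sq (norm_nonneg _), Real.sqrt_sq (norm_nonneg _)] at this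
  -- descent bound
  have hdesc : ∀ k : ℕ, f (xs k) - f (xs (k + 1)) ≤ M * ‖xs (k + 1) - xs k‖ ^ 2 := by
    intro k
    set p := xs (k + 1) with hp
    set c := xs k with hc
    have hnrev : ‖c - p‖ = ‖p - c‖ := norm_sub_rev _ _
    have hnf : ‖f' p‖ = γ⁻¹ * ‖c - p‖ := by
      rw [hopt k, norm_smul, Real.norm_eq_abs, abs_of_pos (by positivity : (0:ℝ) < γ⁻¹)]
    have hcp0 : ‖c - p‖ ≤ ‖xs 0 - xstar‖ := by rw [hnrev]; exact hΔ k
    have hL : ∀ t : ℝ, t ∈ Set.Icc (0:ℝ) 1 →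
        ‖f' (p + t • (c - p)) - f' p‖ ≤
          φ ‖xs 0 - xstar‖ ((1 / γ) * ‖xs 0 - xstar‖) * (t * ‖c - p‖) := by
      intro t ht
      have hs := hsmooth (p + t • (c - p)) p
      have harg : (p + t • (c - p)) - p = t • (c - p) := by abel
      rw [harg] at hs
      have hnt : ‖t • (c - p)‖ = t * ‖c - p‖ := by
        rw [norm_smul, Real.norm_eq_abs, abs_of_nonneg ht.1]
      rw [hnt] at hs
      have htc : t * ‖c - p‖ ≤ ‖xs 0 - xstar‖ := by
        calc t * ‖c - p‖ ≤ 1 * ‖c - p‖ :=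
              mul_le_mul_of_nonneg_right ht.2 (norm_nonneg _)
          _ = ‖c - p‖ := one_mul _
          _ ≤ ‖xs 0 - xstar‖ := hcp0
      have hfn : ‖f' p‖ ≤ (1 / γ) * ‖xs 0 - xstar‖ := by
        rw [hnf, ← one_div]
        exact mul_le_mul_of_nonneg_left hcp0 (by positivity)
      have hmono' := hφ_mono (t * ‖c - p‖) ‖xs 0 - xstar‖ ‖f' p‖
        ((1 / γ) * ‖xs 0 - xstar‖) (mul_nonneg ht.1 (norm_nonneg _)) (norm_nonneg _)
        htc hfn
      calc ‖f' (p + t • (c - p)) - f' p‖ ≤ φ (t * ‖c - p‖) ‖f' p‖ * (t * ‖c - p‖) := hs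
        _ ≤ φ ‖xs 0 - xstar‖ ((1 / γ) * ‖xs 0 - xstar‖) * (t * ‖c - p‖) :=
            mul_le_mul_of_nonneg_right hmono' (mul_nonneg ht.1 (norm_nonneg _))
    have happ := my_descent hf c p (φ ‖xs 0 - xstar‖ ((1 / γ) * ‖xs 0 - xstar‖)) hL
    have hip : ⟪f' p, c - p⟫ = γ⁻¹ * ‖c - p‖ ^ 2 := by
      rw [hopt k, real_inner_smul_left, real_inner_self_eq_norm_sq]
    rw [hip] at happ
    have hM' : M = γ⁻¹ + φ ‖xs 0 - xstar‖ ((1 / γ) * ‖xs 0 - xstar‖) / 2 := by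
      rw [hM, one_div]
    have hsq : ‖xs (k + 1) - xs k‖ ^ 2 = ‖c - p‖ ^ 2 := by rw [← hp, ← hc, hnrev]
    rw [hsq, hM']
    nlinarith [happ]
  -- per-step bound
  have hstep : ∀ t : ℕ, f (xs t) - f xstar ≤
      M * (‖xs t - xstar‖ ^ 2 - ‖xs (t + 1) - xstar‖ ^ 2) := by
    intro t
    have h1 := hA t
    have h2 := hdesc t
    have h3 := hstar (xs (t + 1))
    have hM1 : 1 ≤ 2 * γ * M := by
      rw [hM]
      have : 2 * γ * (1 / γ) = 2 := by field_simp
      nlinarith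
    have h4 := mul_le_mul_of_nonneg_left h1 (le_of_lt hMpos)
    nlinarith [mul_nonneg (sub_nonneg.mpr hM1) (sub_nonneg.mpr h3)]
  -- telescoping sum
  have hsum : ∀ k : ℕ, ∑ t ∈ Finset.range k, (f (xs t) - f xstar) ≤
      M * ‖xs 0 - xstar‖ ^ 2 := by
    intro k
    have h1 : ∑ t ∈ Finset.range k, (f (xs t) - f xstar) ≤
        ∑ t ∈ Finset.range k, M * (‖xs t - xstar‖ ^ 2 - ‖xs (t + 1) - xstar‖ ^ 2) :=
      Finset.sum_le_sum fun t _ => hstep t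
    have h2 : ∑ t ∈ Finset.range k, M * (‖xs t - xstar‖ ^ 2 - ‖xs (t + 1) - xstar‖ ^ 2) =
        M * (‖xs 0 - xstar‖ ^ 2 - ‖xs k - xstar‖ ^ 2) := by
      rw [← Finset.mul_sum, Finset.sum_range_sub' (fun i => ‖xs i - xstar‖ ^ 2)]
    rw [h2] at h1
    have h3 : M * (‖xs 0 - xstar‖ ^ 2 - ‖xs k - xstar‖ ^ 2) ≤ M * ‖xs 0 - xstar‖ ^ 2 :=
      mul_le_mul_of_nonneg_left (by nlinarith [sq_nonneg ‖xs k - xstar‖]) (le_of_lt hMpos)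
    linarith
  -- conclusion
  intro k hk
  have hkpos : (0:ℝ) < (k : ℝ) := Nat.cast_pos.mpr hk
  constructor
  · set ne := Finset.nonempty_range_iff.mpr hk.ne'
    set m := (Finset.range k).inf' ne (fun t => f (xs t) - f xstar) with hm
    have hinf : ∀ t ∈ Finset.range k, m ≤ f (xs t) - f xstar := fun t ht =>
      Finset.inf'_le _ ht
    have hsum' : (k : ℝ) * m ≤ ∑ t ∈ Finset.range k, (f (xs t) - f xstar) := by
      calc (k : ℝ) * m = ∑ _t ∈ Finset.range k, m := by
            rw [Finset.sum_const, Finset.card_range, nsmul_eq_mul]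
        _ ≤ _ := Finset.sum_le_sum hinf
    have := mul_le_mul_of_nonneg_left hsum' (le_of_lt (one_div_pos.mpr hkpos))
    calc m = (1 / (k : ℝ)) * ((k : ℝ) * m) := by field_simp
      _ ≤ (1 / (k : ℝ)) * ∑ t ∈ Finset.range k, (f (xs t) - f xstar) := this
  · have h1 := hsum k
    have := mul_le_mul_of_nonneg_left h1 (le_of_lt (one_div_pos.mpr hkpos))
    calc (1 / (k : ℝ)) * ∑ t ∈ Finset.range k, (f (xs t) - f xstar) ≤
          (1 / (k : ℝ)) * (M * ‖xs 0 - xstar‖ ^ 2) := this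
      _ = (M / (k : ℝ)) * ‖xs 0 - xstar‖ ^ 2 := by ring
end

section
/- Let f : ℝ^d → ℝ be convex and differentiable, γ > 0, x ∈ ℝ^d, x* a minimizer of f with ∇f(x*) = 0. Let xᵖ = prox_{γf}(x), let x̂ ∈ ℝ^d be arbitrary, and Ψ(z) = f(z) + (1/(2γ))‖z-x‖². Then for x⁺ = x - γ∇f(x̂): ‖x⁺ - x*‖² ≤ ‖x - x*‖² - 2γ(f(xᵖ) - f(x*)) - ‖x - xᵖ‖² + γ²‖∇Ψ(x̂)‖². -/
open RealInnerProductSpace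

lemma grad_ineq_aux {d : ℕ} (f : EuclideanSpace ℝ (Fin d) → ℝ)
    (g a b : EuclideanSpace ℝ (Fin d))
    (hconv : ConvexOn ℝ Set.univ f) (hf : HasGradientAt f g a) :
    f a + ⟪g, b - a⟫ ≤ f b := by
  have hline : HasDerivAt (fun t : ℝ => a + t • (b - a)) (b - a) 0 := by
    simpa using ((hasDerivAt_id (0:ℝ)).smul_const (b - a)).const_add a
  have hcomp : HasDerivAt (fun t : ℝ => f (a + t • (b - a))) ⟪g, b - a⟫ 0 := by
    have := (HasFDerivAt.comp_hasDerivAt 0 (by simpa using hf.hasFDerivAt) hline)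
    simpa [InnerProductSpace.toDual_apply_apply, Function.comp_def] using this
  have hslope := hasDerivAt_iff_tendsto_slope.mp hcomp
  have hsub : (nhdsWithin (0:ℝ) (Set.Ioi 0)) ≤ nhdsWithin 0 {(0:ℝ)}ᶜ :=
    nhdsWithin_mono _ (by intro t ht; exact ne_of_gt ht)
  have hten := hslope.mono_left hsub
  have hbound : ∀ᶠ t in nhdsWithin (0:ℝ) (Set.Ioi 0),
      slope (fun t : ℝ => f (a + t • (b - a))) 0 t ≤ f b - f a := by
    filter_upwards [Ioo_mem_nhdsGT_of_mem (by norm_num : (0:ℝ) ∈ Set.Ico 0 1)] with t ht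
    have ht0 : 0 < t := ht.1
    have ht1 : t < 1 := ht.2
    have hc := hconv.2 (Set.mem_univ b) (Set.mem_univ a) (le_of_lt ht0)
      (by linarith : (0:ℝ) ≤ 1 - t) (by ring)
    have heq : (1 - t) • a + t • b = a + t • (b - a) := by
      simp [smul_sub, sub_smul]; abel
    rw [add_comm] at hc
    rw [heq] at hc
    have : f (a + t • (b - a)) - f a ≤ t * (f b - f a) := by
      simp only [smul_eq_mul] at hc; nlinarith
    rw [slope_def_field]
    simp only [zero_smul, add_zero, sub_zero]
    rw [div_le_iff₀ ht0]
    nlinarith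
  have hlim : ⟪g, b - a⟫ ≤ f b - f a :=
    le_of_tendsto hten hbound
  linarith

/-- One-step inequality for the inexact proximal step. -/
theorem stmt11 {d : ℕ} (f : EuclideanSpace ℝ (Fin d) → ℝ)
    (f' : EuclideanSpace ℝ (Fin d) → EuclideanSpace ℝ (Fin d))
    (hconv : ConvexOn ℝ Set.univ f)
    (hf : ∀ x, HasGradientAt f (f' x) x)
    (γ : ℝ) (hγ : 0 < γ) (x xstar xhat xp : EuclideanSpace ℝ (Fin d))
    (hstar : ∀ z, f xstar ≤ f z) (hgrad0 : f' xstar = 0)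
    (hmin : ∀ z, f xp + ‖xp - x‖ ^ 2 / (2 * γ) ≤ f z + ‖z - x‖ ^ 2 / (2 * γ)) :
    ‖(x - γ • f' xhat) - xstar‖ ^ 2 ≤
      ‖x - xstar‖ ^ 2 - 2 * γ * (f xp - f xstar) - ‖x - xp‖ ^ 2 +
        γ ^ 2 * ‖f' xhat + (1 / γ) • (xhat - x)‖ ^ 2 := by
  set g := f' xhat with hg
  have h1 : f xhat + ⟪g, xstar - xhat⟫ ≤ f xstar :=
    grad_ineq_aux f g xhat xstar hconv (hf xhat)
  have h2 := hmin xhat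
  have H2 : 2 * γ * (f xp) + ‖xp - x‖ ^ 2 ≤ 2 * γ * (f xhat) + ‖xhat - x‖ ^ 2 := by
    have h2γ : (0:ℝ) < 2 * γ := by linarith
    have := mul_le_mul_of_nonneg_left h2 h2γ.le
    field_simp at this
    nlinarith [this]
  -- rewrite the last term without 1/γ
  have hsm : γ • (g + (1/γ) • (xhat - x)) = γ • g + (xhat - x) := by
    rw [smul_add, smul_smul, mul_one_div, div_self hγ.ne', one_smul]
  have e2 : γ ^ 2 * ‖g + (1/γ) • (xhat - x)‖ ^ 2 = ‖γ • g + (xhat - x)‖ ^ 2 := by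
    rw [← hsm, norm_smul, mul_pow]
    rw [Real.norm_eq_abs, sq_abs]
  rw [e2]
  have hxp : ‖xp - x‖ ^ 2 = ‖x - xp‖ ^ 2 := by rw [norm_sub_rev]
  have exp1 : ‖(x - γ • g) - xstar‖ ^ 2
      = ‖x - xstar‖ ^ 2 - 2 * γ * ⟪g, x - xstar⟫ + γ^2 * ‖g‖ ^ 2 := by
    have : (x - γ • g) - xstar = (x - xstar) - γ • g := by abel
    rw [this, norm_sub_sq_real, real_inner_smul_right, norm_smul,
      Real.norm_eq_abs, mul_pow, sq_abs, real_inner_comm]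
    ring
  have exp2 : ‖γ • g + (xhat - x)‖ ^ 2
      = γ^2 * ‖g‖ ^ 2 + 2 * γ * ⟪g, xhat - x⟫ + ‖xhat - x‖ ^ 2 := by
    rw [norm_add_sq_real, real_inner_smul_left, norm_smul,
      Real.norm_eq_abs, mul_pow, sq_abs]
    ring
  have hsplit : ⟪g, xstar - xhat⟫ = ⟪g, xstar - x⟫ + ⟪g, x - xhat⟫ := by
    rw [← inner_add_right]; congr 1; abel
  have hsplit2 : ⟪g, x - xstar⟫ = -⟪g, xstar - x⟫ := by
    rw [← inner_neg_right]; congr 1; abel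
  have hsplit3 : ⟪g, xhat - x⟫ = -⟪g, x - xhat⟫ := by
    rw [← inner_neg_right]; congr 1; abel
  rw [exp1, exp2, hsplit2, hsplit3]
  rw [hsplit] at h1
  nlinarith [h1, H2, hγ]
end

section
/- Let f : ℝ^d → ℝ be convex differentiable with minimizer x* (∇f(x*)=0), γ > 0, M = 1/γ + φ(‖x₀-x*‖,(1/γ)‖x₀-x*‖)/2 where f is φ-smooth, and 0 ≤ c < 1. Consider the inexact proximal iteration: at step k, pick x̂_k with ‖∇Ψ_k(x̂_k)‖² ≤ (c/γ²)·‖x_k - x_k^Ψ‖² where Ψ_k(z) = f(z) + (1/(2γ))‖z-x_k‖² and x_k^Ψ = prox_{γf}(x_k), and set x_{k+1} = x_k - γ∇f(x̂_k). Then for every k: ‖x_{k+1} - x*‖² ≤ ‖x_k - x*‖² - ((1-c)/M)·(f(x_k) - f(x*)), and hence (1/k)∑_{t=0}^{k-1}(f(x_t)-f(x*)) ≤ (M/(k(1-c)))·‖x₀-x*‖². -/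
open RealInnerProductSpace Finset

section helper
variable {d : ℕ}

theorem aux_gauss (n : ℕ) : ∑ i ∈ Finset.range n, ((i:ℝ)+1) = n*(n+1)/2 := by
  induction n with
  | zero => simp
  | succ m ih => rw [Finset.sum_range_succ, ih]; push_cast; ring

theorem aux_grad_ineq {f : EuclideanSpace ℝ (Fin d) → ℝ}
    {f' : EuclideanSpace ℝ (Fin d) → EuclideanSpace ℝ (Fin d)}
    (hconv : ConvexOn ℝ Set.univ f) (hf : ∀ x, HasGradientAt f (f' x) x)
    (x y : EuclideanSpace ℝ (Fin d)) :
    f x + ⟪f' x, y - x⟫ ≤ f y := by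
  set g : ℝ → ℝ := fun t => f (x + t • (y - x)) with hg
  have hgc : ConvexOn ℝ Set.univ g := by
    have h := hconv.comp_affineMap (AffineMap.lineMap x y)
    have : (f ∘ (AffineMap.lineMap x y)) = g := by
      funext t
      simp [hg, AffineMap.lineMap_apply_module]
      congr 1
      module
    rw [this] at h
    simpa using h
  have hgd : ∀ t : ℝ, HasDerivAt g ⟪f' (x + t • (y - x)), y - x⟫ t := by
    intro t
    have hL : HasDerivAt (fun t : ℝ => x + t • (y - x)) (y - x) t := by
      simpa using ((hasDerivAt_id t).smul_const (y - x)).const_add x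
    have h2 := (hf (x + t • (y - x))).hasFDerivAt.comp_hasDerivAt t hL
    simp only [InnerProductSpace.toDual_apply_apply] at h2
    exact h2
  have hs := hgc.le_slope_of_hasDerivAt (Set.mem_univ (0:ℝ)) (Set.mem_univ (1:ℝ))
    zero_lt_one (hgd 0)
  rw [slope_def_field] at hs
  have h0 : g 0 = f x := by simp [hg]
  have h1 : g 1 = f y := by simp [hg]
  simp only [zero_smul, add_zero, sub_zero, div_one, h0, h1] at hs
  linarith

theorem aux_descent {f : EuclideanSpace ℝ (Fin d) → ℝ}
    {f' : EuclideanSpace ℝ (Fin d) → EuclideanSpace ℝ (Fin d)}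
    (hgrad : ∀ x y, f x + ⟪f' x, y - x⟫ ≤ f y)
    {φ : ℝ → ℝ → ℝ}
    (hφ_nonneg : ∀ a b, 0 ≤ a → 0 ≤ b → 0 ≤ φ a b)
    (hφ_mono : ∀ a a' b b', 0 ≤ a → 0 ≤ b → a ≤ a' → b ≤ b' → φ a b ≤ φ a' b')
    (hsmooth : ∀ x y, ‖f' x - f' y‖ ≤ φ ‖x - y‖ ‖f' y‖ * ‖x - y‖)
    (x y : EuclideanSpace ℝ (Fin d)) :
    f x ≤ f y + ⟪f' y, x - y⟫ + φ ‖x - y‖ ‖f' y‖ / 2 * ‖x - y‖ ^ 2 := by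
  set h := ‖x - y‖ with hh
  set P := φ ‖x - y‖ ‖f' y‖ with hP
  have hP0 : 0 ≤ P := hφ_nonneg _ _ (norm_nonneg _) (norm_nonneg _)
  have h0 : 0 ≤ h := norm_nonneg _
  have key : ∀ n : ℕ, 0 < n →
      f x - f y - ⟪f' y, x - y⟫ ≤ P * h ^ 2 * ((n:ℝ)+1) / (2*(n:ℝ)) := by
    intro n hn
    have hnR : (0:ℝ) < (n:ℝ) := by exact_mod_cast hn
    set z : ℕ → EuclideanSpace ℝ (Fin d) :=
      fun i => y + ((i:ℝ)/(n:ℝ)) • (x - y) with hz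
    have hz0 : z 0 = y := by simp [hz]
    have hzn : z n = x := by
      simp [hz, div_self hnR.ne']
    have hzy : ∀ i : ℕ, z i - y = ((i:ℝ)/(n:ℝ)) • (x - y) := by
      intro i; simp [hz]
    have hstep : ∀ i : ℕ, z (i+1) - z i = ((1:ℝ)/(n:ℝ)) • (x - y) := by
      intro i
      simp only [hz, add_sub_add_left_eq_sub, ← sub_smul]
      congr 1
      push_cast
      field_simp
      ring
    have htel : f x - f y = ∑ i ∈ Finset.range n, (f (z (i+1)) - f (z i)) := by
      rw [Finset.sum_range_sub (fun i => f (z i)) n, hz0, hzn]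
    have hbase : ⟪f' y, x - y⟫ = ∑ _i ∈ Finset.range n, (1/(n:ℝ)) * ⟪f' y, x - y⟫ := by
      rw [Finset.sum_const, Finset.card_range, nsmul_eq_mul]
      field_simp
    have hterm : ∀ i ∈ Finset.range n,
        f (z (i+1)) - f (z i) ≤ (1/(n:ℝ)) * ⟪f' (z (i+1)), x - y⟫ := by
      intro i _
      have hg := hgrad (z (i+1)) (z i)
      have he : z i - z (i+1) = -(((1:ℝ)/(n:ℝ)) • (x - y)) := by
        rw [← hstep i]; abel
      rw [he, inner_neg_right, real_inner_smul_right] at hg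
      linarith
    have hsum1 : f x - f y - ⟪f' y, x - y⟫ ≤
        ∑ i ∈ Finset.range n, (1/(n:ℝ)) * ⟪f' (z (i+1)) - f' y, x - y⟫ := by
      rw [htel]
      nth_rewrite 1 [hbase]
      rw [← Finset.sum_sub_distrib]
      apply Finset.sum_le_sum
      intro i hi
      rw [inner_sub_left, mul_sub]
      have := hterm i hi
      linarith
    have hsum2 : ∀ i ∈ Finset.range n,
        (1/(n:ℝ)) * ⟪f' (z (i+1)) - f' y, x - y⟫ ≤ P * h^2 * ((i:ℝ)+1) / (n:ℝ)^2 := by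
      intro i hi
      have hfr : (0:ℝ) ≤ ((i:ℝ)+1)/(n:ℝ) := by positivity
      have hnorm : ‖z (i+1) - y‖ = (((i:ℝ)+1)/(n:ℝ)) * h := by
        rw [hzy (i+1), norm_smul, Real.norm_eq_abs, abs_of_nonneg (by push_cast; positivity)]
        push_cast; rw [hh]
      have hle1 : (((i:ℝ)+1)/(n:ℝ)) ≤ 1 := by
        rw [div_le_one hnR]
        exact_mod_cast Nat.succ_le_of_lt (Finset.mem_range.mp hi)
      have hφle : φ ‖z (i+1) - y‖ ‖f' y‖ ≤ P := by
        apply hφ_mono _ _ _ _ (norm_nonneg _) (norm_nonneg _) _ le_rfl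
        rw [hnorm, hh]
        nlinarith [norm_nonneg (x - y)]
      have hCS : ⟪f' (z (i+1)) - f' y, x - y⟫ ≤ ‖f' (z (i+1)) - f' y‖ * h :=
        real_inner_le_norm _ _
      have hsm := hsmooth (z (i+1)) y
      have hφnn : 0 ≤ φ ‖z (i+1) - y‖ ‖f' y‖ :=
        hφ_nonneg _ _ (norm_nonneg _) (norm_nonneg _)
      have h1 : ⟪f' (z (i+1)) - f' y, x - y⟫ ≤ P * ((((i:ℝ)+1)/(n:ℝ)) * h) * h := by
        calc ⟪f' (z (i+1)) - f' y, x - y⟫ ≤ ‖f' (z (i+1)) - f' y‖ * h := hCS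
        _ ≤ (φ ‖z (i+1) - y‖ ‖f' y‖ * ‖z (i+1) - y‖) * h :=
            mul_le_mul_of_nonneg_right hsm h0
        _ = φ ‖z (i+1) - y‖ ‖f' y‖ * ((((i:ℝ)+1)/(n:ℝ)) * h) * h := by rw [hnorm]
        _ ≤ P * ((((i:ℝ)+1)/(n:ℝ)) * h) * h := by
            apply mul_le_mul_of_nonneg_right _ h0
            exact mul_le_mul_of_nonneg_right hφle (by positivity)
      have h2 := mul_le_mul_of_nonneg_left h1 (by positivity : (0:ℝ) ≤ 1/(n:ℝ))
      calc (1/(n:ℝ)) * ⟪f' (z (i+1)) - f' y, x - y⟫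
          ≤ (1/(n:ℝ)) * (P * ((((i:ℝ)+1)/(n:ℝ)) * h) * h) := h2
        _ = P * h^2 * ((i:ℝ)+1) / (n:ℝ)^2 := by field_simp
    have hsum3 : ∑ i ∈ Finset.range n, P * h^2 * ((i:ℝ)+1) / (n:ℝ)^2
        = P * h^2 * ((n:ℝ)+1) / (2*(n:ℝ)) := by
      rw [← Finset.sum_div, ← Finset.mul_sum, aux_gauss]
      field_simp
    calc f x - f y - ⟪f' y, x - y⟫
        ≤ ∑ i ∈ Finset.range n, (1/(n:ℝ)) * ⟪f' (z (i+1)) - f' y, x - y⟫ := hsum1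
      _ ≤ ∑ i ∈ Finset.range n, P * h^2 * ((i:ℝ)+1) / (n:ℝ)^2 :=
          Finset.sum_le_sum hsum2
      _ = P * h^2 * ((n:ℝ)+1) / (2*(n:ℝ)) := hsum3
  have hfin : f x - f y - ⟪f' y, x - y⟫ ≤ P * h^2 / 2 := by
    apply le_of_forall_pos_le_add
    intro ε hε
    obtain ⟨n, hn⟩ := exists_nat_gt (P * h^2 / (2*ε))
    have hN : (0:ℝ) < ((n:ℕ):ℝ) + 1 := by positivity
    have hkey := key (n+1) (Nat.succ_pos n)
    push_cast at hkey
    have hsplit : P * h^2 * (((n:ℝ)+1)+1) / (2*((n:ℝ)+1))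
        = P * h^2 / 2 + P * h^2 / (2*((n:ℝ)+1)) := by
      field_simp
    have hsmall : P * h^2 / (2*((n:ℝ)+1)) ≤ ε := by
      rw [div_le_iff₀ (by positivity)]
      have : P * h^2 / (2*ε) < (n:ℝ) + 1 := by linarith
      rw [div_lt_iff₀ (by positivity)] at this
      nlinarith
    linarith [hkey, hsplit ▸ hkey]
  linarith

theorem aux_prox_grad {f : EuclideanSpace ℝ (Fin d) → ℝ}
    {f' : EuclideanSpace ℝ (Fin d) → EuclideanSpace ℝ (Fin d)}
    (hf : ∀ x, HasGradientAt f (f' x) x)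
    {γ : ℝ} (hγ : 0 < γ) (b p : EuclideanSpace ℝ (Fin d))
    (hp : ∀ z, f p + ‖p - b‖^2/(2*γ) ≤ f z + ‖z - b‖^2/(2*γ)) :
    f' p = (1/γ) • (b - p) := by
  have hq : HasFDerivAt (fun z => f z + ‖z - b‖^2/(2*γ))
      (InnerProductSpace.toDual ℝ _ (f' p + (1/γ) • (p - b))) p := by
    have h1 : HasFDerivAt (fun z : EuclideanSpace ℝ (Fin d) => z - b)
        (ContinuousLinearMap.id ℝ _) p := (hasFDerivAt_id p).sub_const b
    have h2 := h1.norm_sq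
    have h3 := h2.const_smul (R := ℝ) ((2*γ)⁻¹)
    have h4 := (hf p).hasFDerivAt.add h3
    have hfun : (fun z : EuclideanSpace ℝ (Fin d) => f z + ‖z - b‖^2/(2*γ))
        = (fun z => f z + (2*γ)⁻¹ • ‖z - b‖^2) := by
      funext z; rw [smul_eq_mul]; ring
    rw [hfun]
    refine HasFDerivAt.congr_fderiv h4 ?_
    ext v
    simp [InnerProductSpace.toDual_apply_apply, inner_add_left, real_inner_smul_left,
      two_smul, ContinuousLinearMap.smul_apply]
    field_simp
    ring
  have hmin : IsLocalMin (fun z => f z + ‖z - b‖^2/(2*γ)) p :=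
    Filter.Eventually.of_forall (fun z => hp z)
  have h0 := hmin.hasFDerivAt_eq_zero hq
  have h5 : f' p + (1/γ) • (p - b) = 0 := by
    have := congrArg (InnerProductSpace.toDual ℝ (EuclideanSpace ℝ (Fin d))).symm h0
    simpa using this
  have h6 : f' p = -((1/γ) • (p - b)) := eq_neg_of_add_eq_zero_left h5
  rw [h6, ← smul_neg, neg_sub]

end helper

set_option maxHeartbeats 2000000 in
/-- Deterministic inexact proximal point method: per-step decrease and
    sublinear convergence under convexity and φ-smoothness. -/
theorem stmt12 {d : ℕ} (f : EuclideanSpace ℝ (Fin d) → ℝ)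
    (f' : EuclideanSpace ℝ (Fin d) → EuclideanSpace ℝ (Fin d))
    (hconv : ConvexOn ℝ Set.univ f)
    (hf : ∀ x, HasGradientAt f (f' x) x)
    (φ : ℝ → ℝ → ℝ)
    (hφ_nonneg : ∀ a b, 0 ≤ a → 0 ≤ b → 0 ≤ φ a b)
    (hφ_mono : ∀ a a' b b', 0 ≤ a → 0 ≤ b → a ≤ a' → b ≤ b' → φ a b ≤ φ a' b')
    (hsmooth : ∀ x y, ‖f' x - f' y‖ ≤ φ ‖x - y‖ ‖f' y‖ * ‖x - y‖)
    (xstar : EuclideanSpace ℝ (Fin d)) (hstar : ∀ z, f xstar ≤ f z)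
    (hgrad0 : f' xstar = 0)
    (γ : ℝ) (hγ : 0 < γ) (c : ℝ) (hc0 : 0 ≤ c) (hc1 : c < 1)
    (xs xhat xp : ℕ → EuclideanSpace ℝ (Fin d))
    (hxp : ∀ k z, f (xp k) + ‖xp k - xs k‖ ^ 2 / (2 * γ) ≤
      f z + ‖z - xs k‖ ^ 2 / (2 * γ))
    (hinexact : ∀ k, ‖f' (xhat k) + (1 / γ) • (xhat k - xs k)‖ ^ 2 ≤
      (c / γ ^ 2) * ‖xs k - xp k‖ ^ 2)
    (hupd : ∀ k, xs (k + 1) = xs k - γ • f' (xhat k))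
    (M : ℝ) (hM : M = 1 / γ + φ ‖xs 0 - xstar‖ ((1 / γ) * ‖xs 0 - xstar‖) / 2) :
    (∀ k, ‖xs (k + 1) - xstar‖ ^ 2 ≤
        ‖xs k - xstar‖ ^ 2 - ((1 - c) / M) * (f (xs k) - f xstar)) ∧
      ∀ k : ℕ, 0 < k →
        (1 / (k : ℝ)) * ∑ t ∈ Finset.range k, (f (xs t) - f xstar) ≤
          (M / ((k : ℝ) * (1 - c))) * ‖xs 0 - xstar‖ ^ 2 := by
  have hgrad := aux_grad_ineq hconv hf
  have hdesc := aux_descent hgrad hφ_nonneg hφ_mono hsmooth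
  have hpg : ∀ k, f' (xp k) = (1/γ) • (xs k - xp k) := fun k =>
    aux_prox_grad hf hγ (xs k) (xp k) (hxp k)
  have h2γ : (0:ℝ) < 2*γ := by linarith
  have hdivcancel : ∀ t : ℝ, 2*γ*(t/(2*γ)) = t := fun t => by field_simp
  have hφR := hφ_nonneg ‖xs 0 - xstar‖ ((1/γ) * ‖xs 0 - xstar‖) (norm_nonneg _)
    (by positivity)
  have hMpos : 0 < M := by rw [hM]; positivity
  have hfstar : ∀ z, 0 ≤ f z - f xstar := fun z => by linarith [hstar z]
  -- Key per-step inequality (A)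
  have hA : ∀ k, ‖xs (k+1) - xstar‖^2 ≤
      ‖xs k - xstar‖^2 - 2*γ*(f (xp k) - f xstar) - (1-c)*‖xs k - xp k‖^2 := by
    intro k
    set a := xs k - xstar with ha
    set w := f' (xhat k) with hw
    set v := xhat k - xs k with hv
    have hupd' : xs (k+1) - xstar = a - γ • w := by
      rw [hupd k, ha, hw]; abel
    have h1 : ‖a - γ • w‖^2 = ‖a‖^2 - 2*(γ*⟪w,a⟫) + γ^2*‖w‖^2 := by
      rw [norm_sub_sq_real, real_inner_smul_right, norm_smul, Real.norm_eq_abs,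
        abs_of_pos hγ, mul_pow, real_inner_comm]
    have h2 : γ^2*‖w + (1/γ) • v‖^2 = γ^2*‖w‖^2 + 2*(γ*⟪w,v⟫) + ‖v‖^2 := by
      rw [norm_add_sq_real, real_inner_smul_right, norm_smul, Real.norm_eq_abs,
        abs_of_pos (by positivity : (0:ℝ) < 1/γ), mul_pow]
      field_simp
    have h3 : xhat k - xstar = v + a := by rw [hv, ha]; abel
    have hII := hgrad (xhat k) xstar
    have hIIe : ⟪w, xstar - xhat k⟫ = -(⟪w,v⟫ + ⟪w,a⟫) := by
      rw [← inner_add_right, ← h3, ← inner_neg_right, neg_sub]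
    rw [hIIe] at hII
    have hIII := hxp k (xhat k)
    have hIII' : 2*γ*f (xp k) + ‖xp k - xs k‖^2 ≤ 2*γ*f (xhat k) + ‖xhat k - xs k‖^2 := by
      have h := mul_le_mul_of_nonneg_left hIII h2γ.le
      rw [mul_add, mul_add, hdivcancel, hdivcancel] at h
      exact h
    have hIV : γ^2*‖w + (1/γ) • v‖^2 ≤ c*‖xs k - xp k‖^2 := by
      have h := mul_le_mul_of_nonneg_left (hinexact k) (sq_nonneg γ)
      calc γ^2*‖w + (1/γ) • v‖^2 ≤ γ^2*((c/γ^2) * ‖xs k - xp k‖^2) := h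
        _ = c*‖xs k - xp k‖^2 := by field_simp
    have hn1 : ‖xp k - xs k‖ = ‖xs k - xp k‖ := norm_sub_rev _ _
    have hn2 : ‖xhat k - xs k‖ = ‖v‖ := rfl
    have hmul := mul_le_mul_of_nonneg_left hII h2γ.le
    rw [hupd', h1]
    rw [hn1, hn2] at hIII'
    nlinarith [hII, hIII', hIV, h2, hγ]
  -- Monotone decrease of distances
  have hmono : ∀ k, ‖xs k - xstar‖^2 ≤ ‖xs 0 - xstar‖^2 := by
    intro k
    induction k with
    | zero => exact le_refl _
    | succ m ih =>
      have := hA m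
      have h1 := hfstar (xp m)
      have h2 : 0 ≤ (1-c)*‖xs m - xp m‖^2 :=
        mul_nonneg (by linarith) (sq_nonneg _)
      have h3 : 0 ≤ γ * (f (xp m) - f xstar) := mul_nonneg hγ.le h1
      linarith
  -- xp is close: ‖xs k - xp k‖² ≤ ‖xs k - xstar‖²
  have hpx2 : ∀ k, ‖xs k - xp k‖^2 ≤ ‖xs k - xstar‖^2 := by
    intro k
    have h := hxp k xstar
    have h2 := hstar (xp k)
    have h3 : ‖xp k - xs k‖^2/(2*γ) ≤ ‖xstar - xs k‖^2/(2*γ) := by linarith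
    have h4 := mul_le_mul_of_nonneg_left h3 h2γ.le
    rw [hdivcancel, hdivcancel] at h4
    rw [norm_sub_rev (xs k) (xp k), norm_sub_rev (xs k) xstar]
    exact h4
  have hsq_le : ∀ (s t : ℝ), 0 ≤ s → 0 ≤ t → s^2 ≤ t^2 → s ≤ t := by
    intro s t hs ht h
    nlinarith
  -- φ-smoothness bound: f(xs k) ≤ f(xp k) + M * ‖xs k - xp k‖²
  have hB : ∀ k, f (xs k) ≤ f (xp k) + M * ‖xs k - xp k‖^2 := by
    intro k
    have hd := hdesc (xs k) (xp k)
    have hinner : ⟪f' (xp k), xs k - xp k⟫ = (1/γ)*‖xs k - xp k‖^2 := by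
      rw [hpg k, real_inner_smul_left, real_inner_self_eq_norm_sq]
    have hfp : ‖f' (xp k)‖ = (1/γ)*‖xs k - xp k‖ := by
      rw [hpg k, norm_smul, Real.norm_eq_abs, abs_of_pos (by positivity : (0:ℝ) < 1/γ)]
    have hpxle : ‖xs k - xp k‖ ≤ ‖xs 0 - xstar‖ := by
      apply hsq_le _ _ (norm_nonneg _) (norm_nonneg _)
      exact le_trans (hpx2 k) (hmono k)
    have hφle : φ ‖xs k - xp k‖ ‖f' (xp k)‖ ≤ φ ‖xs 0 - xstar‖ ((1/γ) * ‖xs 0 - xstar‖) := by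
      apply hφ_mono _ _ _ _ (norm_nonneg _) (norm_nonneg _) hpxle
      rw [hfp]
      exact mul_le_mul_of_nonneg_left hpxle (by positivity)
    have hq := mul_le_mul_of_nonneg_right hφle (sq_nonneg ‖xs k - xp k‖)
    rw [hinner] at hd
    rw [hM]
    nlinarith
  -- Per-step conclusion
  have hstep1 : ∀ k, ‖xs (k + 1) - xstar‖ ^ 2 ≤
      ‖xs k - xstar‖ ^ 2 - ((1 - c) / M) * (f (xs k) - f xstar) := by
    intro k
    have h1c : (0:ℝ) < 1 - c := by linarith
    have hcoef : 0 ≤ (1-c)/M := by positivity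
    have key1 : ((1-c)/M) * (f (xs k) - f xstar) ≤
        ((1-c)/M) * (f (xp k) - f xstar) + (1-c)*‖xs k - xp k‖^2 := by
      have h := mul_le_mul_of_nonneg_left
        (by linarith [hB k] : f (xs k) - f xstar ≤ (f (xp k) - f xstar) + M * ‖xs k - xp k‖^2)
        hcoef
      have he : ((1-c)/M) * ((f (xp k) - f xstar) + M * ‖xs k - xp k‖^2)
          = ((1-c)/M) * (f (xp k) - f xstar) + (1-c)*‖xs k - xp k‖^2 := by
        field_simp
      linarith [he ▸ h]
    have hcle : (1-c)/M ≤ 2*γ := by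
      rw [div_le_iff₀ hMpos, hM]
      have he : (1/γ + φ ‖xs 0 - xstar‖ ((1/γ) * ‖xs 0 - xstar‖)/2) * (2*γ)
          = 2 + γ * φ ‖xs 0 - xstar‖ ((1/γ) * ‖xs 0 - xstar‖) := by
        field_simp
      rw [mul_comm (2*γ)]
      rw [he]
      nlinarith [hγ, hφR]
    have key2 : ((1-c)/M) * (f (xp k) - f xstar) ≤ 2*γ*(f (xp k) - f xstar) :=
      mul_le_mul_of_nonneg_right hcle (hfstar (xp k))
    have := hA k
    linarith
  refine ⟨hstep1, ?_⟩
  have htel : ∀ k, ((1-c)/M) * ∑ t ∈ Finset.range k, (f (xs t) - f xstar)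
      + ‖xs k - xstar‖^2 ≤ ‖xs 0 - xstar‖^2 := by
    intro k
    induction k with
    | zero => simp
    | succ m ih =>
      rw [Finset.sum_range_succ, mul_add]
      have := hstep1 m
      linarith
  intro k hk
  have hk' : (0:ℝ) < (k:ℝ) := by exact_mod_cast hk
  have h1c : (0:ℝ) < 1 - c := by linarith
  set S := ∑ t ∈ Finset.range k, (f (xs t) - f xstar) with hS
  have hS1 : ((1-c)/M)*S ≤ ‖xs 0 - xstar‖^2 := by
    have := htel k
    nlinarith [sq_nonneg ‖xs k - xstar‖]
  have h1 : (1-c)*S ≤ M*‖xs 0 - xstar‖^2 := by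
    rw [div_mul_eq_mul_div, div_le_iff₀ hMpos] at hS1
    linarith
  rw [div_mul_eq_mul_div, div_mul_eq_mul_div, div_le_div_iff₀ hk' (by positivity)]
  nlinarith [mul_le_mul_of_nonneg_left h1 hk'.le]
end

section
/- Let f : ℝ → ℝ be defined by f(x) = a·x^(2s) for a > 0 and integer s ≥ 2 (more generally f(x) = a‖x‖^(2s) on ℝ^d). Then f is convex, and f does not have Lipschitz continuous gradient on ℝ^d (i.e., f is not L-smooth for any L), but f is (L₀, L₁)-smooth in the symmetric sense with appropriate constants: there exist L₀, L₁ ≥ 0 such that ‖∇f(x) - ∇f(y)‖ ≤ (L₀ + L₁·sup_{u∈[x,y]}‖∇f(u)‖)·‖x-y‖ for all x, y. -/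
open RealInnerProductSpace

section aux

variable {E : Type*} [NormedAddCommGroup E] [InnerProductSpace ℝ E] [CompleteSpace E]

private lemma stmt15_pow_sub_pow {p : ℕ} {b c M : ℝ} (hb : 0 ≤ b) (hbc : b ≤ c) (hcM : c ≤ M) :
    c ^ p - b ^ p ≤ p * M ^ (p - 1) * (c - b) := by
  have hM : 0 ≤ M := le_trans (hb.trans hbc) hcM
  rw [← geom_sum₂_mul c b p]
  have hsum : (∑ i ∈ Finset.range p, c ^ i * b ^ (p - 1 - i)) ≤ p * M ^ (p - 1) := by
    calc (∑ i ∈ Finset.range p, c ^ i * b ^ (p - 1 - i))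
        ≤ ∑ i ∈ Finset.range p, M ^ (p - 1) := by
          apply Finset.sum_le_sum
          intro i hi
          have hi' : i < p := Finset.mem_range.mp hi
          have h1 : c ^ i * b ^ (p - 1 - i) ≤ M ^ i * M ^ (p - 1 - i) := by
            apply mul_le_mul (pow_le_pow_left₀ (hb.trans hbc) hcM i)
              (pow_le_pow_left₀ hb (hbc.trans hcM) _) (pow_nonneg hb _) (pow_nonneg hM _)
          rw [← pow_add] at h1
          have : i + (p - 1 - i) = p - 1 := by omega
          rwa [this] at h1
      _ = p * M ^ (p - 1) := by rw [Finset.sum_const, Finset.card_range, nsmul_eq_mul]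
  exact mul_le_mul_of_nonneg_right hsum (sub_nonneg.mpr hbc)

private lemma stmt15_abs_pow_sub_pow {p : ℕ} {b c M : ℝ} (hb : 0 ≤ b) (hc : 0 ≤ c)
    (hbM : b ≤ M) (hcM : c ≤ M) : |c ^ p - b ^ p| ≤ p * M ^ (p - 1) * |c - b| := by
  rcases le_total b c with h | h
  · rw [abs_of_nonneg (sub_nonneg.mpr (pow_le_pow_left₀ hb h p)),
      abs_of_nonneg (sub_nonneg.mpr h)]
    exact stmt15_pow_sub_pow hb h hcM
  · rw [abs_sub_comm, abs_of_nonneg (sub_nonneg.mpr (pow_le_pow_left₀ hc h p)),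
      abs_sub_comm, abs_of_nonneg (sub_nonneg.mpr h)]
    exact stmt15_pow_sub_pow hc h hbM

private lemma stmt15_key (p : ℕ) (x y : E) :
    ‖‖x‖ ^ p • x - ‖y‖ ^ p • y‖ ≤ (p + 1) * max ‖x‖ ‖y‖ ^ p * ‖x - y‖ := by
  set M := max ‖x‖ ‖y‖ with hM
  have hxM : ‖x‖ ≤ M := le_max_left _ _
  have hyM : ‖y‖ ≤ M := le_max_right _ _
  have hM0 : 0 ≤ M := le_trans (norm_nonneg x) hxM
  rcases Nat.eq_zero_or_pos p with hp | hp
  · subst hp; simpa using le_refl ‖x - y‖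
  have expand : ‖x‖ ^ p • x - ‖y‖ ^ p • y
      = ‖x‖ ^ p • (x - y) + (‖x‖ ^ p - ‖y‖ ^ p) • y := by
    rw [smul_sub, sub_smul]; abel
  rw [expand]
  calc ‖‖x‖ ^ p • (x - y) + (‖x‖ ^ p - ‖y‖ ^ p) • y‖
      ≤ ‖‖x‖ ^ p • (x - y)‖ + ‖(‖x‖ ^ p - ‖y‖ ^ p) • y‖ := norm_add_le _ _
    _ = ‖x‖ ^ p * ‖x - y‖ + |‖x‖ ^ p - ‖y‖ ^ p| * ‖y‖ := by
        rw [norm_smul, norm_smul, Real.norm_eq_abs, Real.norm_eq_abs,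
          abs_of_nonneg (pow_nonneg (norm_nonneg x) p)]
    _ ≤ M ^ p * ‖x - y‖ + (p * M ^ (p - 1) * ‖x - y‖) * M := by
        apply add_le_add
        · exact mul_le_mul_of_nonneg_right (pow_le_pow_left₀ (norm_nonneg x) hxM p)
            (norm_nonneg _)
        · have h1 : |‖x‖ ^ p - ‖y‖ ^ p| ≤ p * M ^ (p - 1) * ‖x - y‖ := by
            calc |‖x‖ ^ p - ‖y‖ ^ p| ≤ p * M ^ (p - 1) * |‖x‖ - ‖y‖| :=
                stmt15_abs_pow_sub_pow (norm_nonneg y) (norm_nonneg x) hyM hxM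
              _ ≤ p * M ^ (p - 1) * ‖x - y‖ := by
                  apply mul_le_mul_of_nonneg_left (abs_norm_sub_norm_le x y)
                  positivity
          exact mul_le_mul h1 hyM (norm_nonneg y) (by positivity)
    _ = (M ^ p + p * (M ^ (p - 1) * M)) * ‖x - y‖ := by ring
    _ = (p + 1) * M ^ p * ‖x - y‖ := by
        rw [← pow_succ, Nat.sub_add_cancel hp]; ring

private lemma stmt15_grad (a : ℝ) {s : ℕ} (hs : 1 ≤ s) (x : E) :
    HasGradientAt (fun x : E => a * ‖x‖ ^ (2 * s)) ((2 * s * a * ‖x‖ ^ (2 * s - 2)) • x) x := by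
  rw [hasGradientAt_iff_hasFDerivAt]
  have h1 : HasFDerivAt (fun x : E => ‖x‖ ^ 2) (2 • (innerSL ℝ x)) x := by
    simpa using (hasFDerivAt_id x).norm_sq
  have h2 : HasDerivAt (fun t : ℝ => a * t ^ s) (a * (s * (‖x‖ ^ 2) ^ (s - 1))) (‖x‖ ^ 2) :=
    (hasDerivAt_pow s (‖x‖ ^ 2)).const_mul a
  have h3 := h2.comp_hasFDerivAt x h1
  have heq : (fun x : E => a * ‖x‖ ^ (2 * s)) = (fun t : ℝ => a * t ^ s) ∘ (fun x : E => ‖x‖ ^ 2) := by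
    funext z
    simp [Function.comp, ← pow_mul, mul_comm s 2]
  rw [heq]
  refine h3.congr_fderiv ?_
  apply ContinuousLinearMap.ext
  intro v
  have hpow : ‖x‖ ^ (2 * s - 2) = (‖x‖ ^ 2) ^ (s - 1) := by
    rw [← pow_mul]
    congr 1
    omega
  simp [InnerProductSpace.toDual_apply_apply, real_inner_smul_left, hpow]
  ring

end aux

/-- The function x ↦ a‖x‖^{2s} is convex, not globally L-smooth for s ≥ 2,
    but symmetrically (L₀,L₁)-smooth for some constants. -/
theorem stmt15 (d : ℕ) (hd : 0 < d) (a : ℝ) (ha : 0 < a) (s : ℕ) (hs : 2 ≤ s)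
    (f : EuclideanSpace ℝ (Fin d) → ℝ) (hfdef : f = fun x => a * ‖x‖ ^ (2 * s)) :
    ConvexOn ℝ Set.univ f ∧
      (∀ L : ℝ, ¬ ∀ x y, ‖gradient f x - gradient f y‖ ≤ L * ‖x - y‖) ∧
      ∃ L0 L1 : ℝ, 0 ≤ L0 ∧ 0 ≤ L1 ∧ ∀ x y, ‖gradient f x - gradient f y‖ ≤
        (L0 + L1 * sSup ((fun u => ‖gradient f u‖) '' segment ℝ x y)) * ‖x - y‖ := by
  subst hfdef
  have hs1 : 1 ≤ s := le_trans (by norm_num) hs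
  -- gradient formula
  have hgrad : ∀ x : EuclideanSpace ℝ (Fin d),
      gradient (fun x : EuclideanSpace ℝ (Fin d) => a * ‖x‖ ^ (2 * s)) x
        = (2 * s * a * ‖x‖ ^ (2 * s - 2)) • x :=
    fun x => (stmt15_grad a hs1 x).gradient
  have hc0 : (0:ℝ) ≤ 2 * s * a := by positivity
  have hgnorm : ∀ x : EuclideanSpace ℝ (Fin d),
      ‖gradient (fun x : EuclideanSpace ℝ (Fin d) => a * ‖x‖ ^ (2 * s)) x‖
        = 2 * s * a * ‖x‖ ^ (2 * s - 1) := by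
    intro x
    rw [hgrad, norm_smul, Real.norm_eq_abs, abs_of_nonneg (by positivity), mul_assoc,
      ← pow_succ]
    congr 2
    omega
  refine ⟨?_, ?_, ?_⟩
  · -- convexity
    refine ⟨convex_univ, ?_⟩
    intro x _ y _ p q hp hq hpq
    have hz : ‖p • x + q • y‖ ≤ p * ‖x‖ + q * ‖y‖ := by
      calc ‖p • x + q • y‖ ≤ ‖p • x‖ + ‖q • y‖ := norm_add_le _ _
        _ = p * ‖x‖ + q * ‖y‖ := by
            rw [norm_smul, norm_smul, Real.norm_eq_abs, Real.norm_eq_abs,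
              abs_of_nonneg hp, abs_of_nonneg hq]
    have h1 : ‖p • x + q • y‖ ^ (2 * s) ≤ (p * ‖x‖ + q * ‖y‖) ^ (2 * s) :=
      pow_le_pow_left₀ (norm_nonneg _) hz _
    have h2 := (convexOn_pow (𝕜 := ℝ) (2 * s)).2 (Set.mem_Ici.mpr (norm_nonneg x))
      (Set.mem_Ici.mpr (norm_nonneg y)) hp hq hpq
    simp only [smul_eq_mul] at h2 ⊢
    calc a * ‖p • x + q • y‖ ^ (2 * s) ≤ a * (p * ‖x‖ ^ (2 * s) + q * ‖y‖ ^ (2 * s)) := by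
          apply mul_le_mul_of_nonneg_left (le_trans h1 h2) ha.le
      _ = p * (a * ‖x‖ ^ (2 * s)) + q * (a * ‖y‖ ^ (2 * s)) := by ring
  · -- not L-smooth
    intro L hL
    -- unit vector
    set e : EuclideanSpace ℝ (Fin d) := EuclideanSpace.single ⟨0, hd⟩ (1:ℝ) with he
    have hne : ‖e‖ = 1 := by simp [he, EuclideanSpace.norm_single]
    set t : ℝ := max 1 ((|L| + 1) / (2 * s * a)) with ht
    have ht1 : (1:ℝ) ≤ t := le_max_left _ _
    have ht0 : (0:ℝ) < t := lt_of_lt_of_le one_pos ht1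
    have hxn : ‖t • e‖ = t := by
      rw [norm_smul, hne, Real.norm_eq_abs, abs_of_pos ht0, mul_one]
    have hg0 : gradient (fun x : EuclideanSpace ℝ (Fin d) => a * ‖x‖ ^ (2 * s)) 0 = 0 := by
      rw [hgrad]; simp
    have := hL (t • e) 0
    rw [hg0, sub_zero, sub_zero, hgnorm, hxn] at this
    -- this : 2*s*a * t^(2s-1) ≤ L * t
    have hkey : 2 * s * a * t ^ (2 * s - 1) > L * t := by
      have h2 : t ≤ t ^ (2 * s - 2) := le_self_pow₀ ht1 (by omega)
      have h3 : |L| + 1 ≤ 2 * s * a * t := by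
        have : (|L| + 1) / (2 * s * a) ≤ t := le_max_right _ _
        calc |L| + 1 = 2 * s * a * ((|L| + 1) / (2 * s * a)) := by
              field_simp
          _ ≤ 2 * s * a * t := by
              apply mul_le_mul_of_nonneg_left this hc0
      have h4 : L * t < (|L| + 1) * t := by
        apply mul_lt_mul_of_pos_right _ ht0
        exact lt_of_le_of_lt (le_abs_self L) (by linarith)
      calc L * t < (|L| + 1) * t := h4
        _ ≤ (2 * s * a * t) * t := mul_le_mul_of_nonneg_right h3 ht0.le
        _ ≤ 2 * s * a * t ^ (2 * s - 1) := by
            have h6 : t * t ≤ t ^ (2 * s - 2) * t := mul_le_mul_of_nonneg_right h2 ht0.le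
            rw [← pow_succ] at h6
            have h5 : 2 * s - 2 + 1 = 2 * s - 1 := by omega
            rw [h5] at h6
            calc 2 * s * a * t * t = 2 * s * a * (t * t) := by ring
              _ ≤ 2 * s * a * t ^ (2 * s - 1) := mul_le_mul_of_nonneg_left h6 hc0
    exact absurd this (not_le.mpr hkey)
  · -- (L0, L1)-smoothness
    have h2s : (2:ℝ) ≤ (s:ℝ) := by exact_mod_cast hs
    have hL1 : (0:ℝ) ≤ 2 * (s:ℝ) - 1 := by linarith
    refine ⟨2 * s * a * (2 * s - 1), 2 * s - 1, mul_nonneg hc0 hL1, hL1, ?_⟩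
    intro x y
    set M : ℝ := max ‖x‖ ‖y‖ with hMdef
    have hxM : ‖x‖ ≤ M := le_max_left _ _
    have hyM : ‖y‖ ≤ M := le_max_right _ _
    have hM0 : 0 ≤ M := le_trans (norm_nonneg x) hxM
    set S : Set ℝ := (fun u => ‖gradient (fun x : EuclideanSpace ℝ (Fin d) =>
      a * ‖x‖ ^ (2 * s)) u‖) '' segment ℝ x y with hSdef
    have hbdd : ∀ z ∈ S, z ≤ 2 * s * a * M ^ (2 * s - 1) := by
      rintro z ⟨u, hu, rfl⟩
      dsimp only
      rw [hgnorm]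
      have huM : ‖u‖ ≤ M := convexOn_univ_norm.le_on_segment trivial trivial hu
      exact mul_le_mul_of_nonneg_left (pow_le_pow_left₀ (norm_nonneg u) huM _) hc0
    have hBddAbove : BddAbove S := ⟨_, fun z hz => hbdd z hz⟩
    have hSx : 2 * s * a * ‖x‖ ^ (2 * s - 1) ≤ sSup S := by
      rw [← hgnorm x]
      exact le_csSup hBddAbove ⟨x, left_mem_segment ℝ x y, rfl⟩
    have hSy : 2 * s * a * ‖y‖ ^ (2 * s - 1) ≤ sSup S := by
      rw [← hgnorm y]
      exact le_csSup hBddAbove ⟨y, right_mem_segment ℝ x y, rfl⟩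
    have hSM : 2 * s * a * M ^ (2 * s - 1) ≤ sSup S := by
      rcases max_cases ‖x‖ ‖y‖ with ⟨h, _⟩ | ⟨h, _⟩
      · rw [hMdef, h]; exact hSx
      · rw [hMdef, h]; exact hSy
    -- main bound
    have hcast : ((2 * s - 2 : ℕ) : ℝ) + 1 = 2 * (s:ℝ) - 1 := by
      rw [Nat.cast_sub (by omega : 2 ≤ 2 * s)]
      push_cast
      ring
    have hlhs : ‖gradient (fun x : EuclideanSpace ℝ (Fin d) => a * ‖x‖ ^ (2 * s)) x
        - gradient (fun x : EuclideanSpace ℝ (Fin d) => a * ‖x‖ ^ (2 * s)) y‖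
        ≤ (2 * (s:ℝ) - 1) * (2 * s * a) * M ^ (2 * s - 2) * ‖x - y‖ := by
      rw [hgrad, hgrad]
      have hfac : (2 * s * a * ‖x‖ ^ (2 * s - 2)) • x - (2 * s * a * ‖y‖ ^ (2 * s - 2)) • y
          = (2 * s * a) • (‖x‖ ^ (2 * s - 2) • x - ‖y‖ ^ (2 * s - 2) • y) := by
        rw [smul_sub, smul_smul, smul_smul]
      rw [hfac, norm_smul, Real.norm_eq_abs, abs_of_nonneg hc0]
      have hk := stmt15_key (2 * s - 2) x y
      rw [hcast] at hk
      calc 2 * ↑s * a * ‖‖x‖ ^ (2 * s - 2) • x - ‖y‖ ^ (2 * s - 2) • y‖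
          ≤ 2 * ↑s * a * ((2 * (s:ℝ) - 1) * M ^ (2 * s - 2) * ‖x - y‖) :=
            mul_le_mul_of_nonneg_left hk hc0
        _ = (2 * (s:ℝ) - 1) * (2 * ↑s * a) * M ^ (2 * s - 2) * ‖x - y‖ := by ring
    have hM1 : M ^ (2 * s - 2) ≤ 1 + M ^ (2 * s - 1) := by
      rcases le_total M 1 with h | h
      · have : M ^ (2 * s - 2) ≤ 1 := pow_le_one₀ hM0 h
        have h2 : 0 ≤ M ^ (2 * s - 1) := pow_nonneg hM0 _
        linarith
      · have : M ^ (2 * s - 2) ≤ M ^ (2 * s - 1) := pow_le_pow_right₀ h (by omega)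
        linarith
    calc ‖gradient (fun x : EuclideanSpace ℝ (Fin d) => a * ‖x‖ ^ (2 * s)) x
        - gradient (fun x : EuclideanSpace ℝ (Fin d) => a * ‖x‖ ^ (2 * s)) y‖
        ≤ (2 * (s:ℝ) - 1) * (2 * s * a) * M ^ (2 * s - 2) * ‖x - y‖ := hlhs
      _ ≤ (2 * (s:ℝ) - 1) * (2 * s * a) * (1 + M ^ (2 * s - 1)) * ‖x - y‖ := by
          apply mul_le_mul_of_nonneg_right _ (norm_nonneg _)
          exact mul_le_mul_of_nonneg_left hM1 (mul_nonneg hL1 hc0)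
      _ = (2 * s * a * (2 * s - 1) + (2 * (s:ℝ) - 1) * (2 * s * a * M ^ (2 * s - 1))) * ‖x - y‖ := by
          ring
      _ ≤ (2 * s * a * (2 * s - 1) + (2 * (s:ℝ) - 1) * sSup S) * ‖x - y‖ := by
          apply mul_le_mul_of_nonneg_right _ (norm_nonneg _)
          apply add_le_add_right
          exact mul_le_mul_of_nonneg_left hSM hL1
end
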